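/- arXiv:2102.06476 — 7 statements merged into one kernel-verified Lean document; each statement's English description precedes it below -/
import Mathlib

section
/- Let a < t < b and let ψ : [α,β] → [a,b] be continuously differentiable with ψ(α)=a, ψ(β)=b, ψ'(ξ)>0 on (α,β), and let τ ∈ (α,β) satisfy ψ(τ)=t. Then the Cauchy principal value ⨍_α^β ψ'(ξ)/(ψ(ξ)-ψ(τ)) dξ, defined as lim_{ε→0⁺}(∫_α^{τ-ε} + ∫_{τ+ε}^β), equals log|(b-t)/(a-t)|, independently of ψ. -/
open Filter Real intervalIntegral Set

lemma cpv_seg (α β t u v : ℝ) (ψ : ℝ → ℝ) (hαβ : α < β)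
    (hψC1 : ContDiffOn ℝ 1 ψ (Icc α β))
    (huv : u ≤ v) (hsub : Icc u v ⊆ Icc α β)
    (hne : ∀ x ∈ Icc u v, ψ x ≠ t) :
    ∫ ξ in u..v, derivWithin ψ (Icc α β) ξ / (ψ ξ - t)
      = Real.log (ψ v - t) - Real.log (ψ u - t) := by
  have hUD : UniqueDiffOn ℝ (Icc α β) := uniqueDiffOn_Icc hαβ
  have hψ'c : ContinuousOn (derivWithin ψ (Icc α β)) (Icc α β) :=
    hψC1.continuousOn_derivWithin hUD le_rfl
  have hcont : ContinuousOn (fun y => Real.log (ψ y - t)) (Icc u v) := by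
    apply ContinuousOn.log ((hψC1.continuousOn.mono hsub).sub continuousOn_const)
    intro x hx; exact sub_ne_zero.2 (hne x hx)
  apply intervalIntegral.integral_eq_sub_of_hasDeriv_right_of_le huv hcont
  · intro x hx
    have hxαβ : x ∈ Ioo α β := by
      constructor
      · exact lt_of_le_of_lt (hsub (left_mem_Icc.2 huv)).1 hx.1
      · exact lt_of_lt_of_le hx.2 (hsub (right_mem_Icc.2 huv)).2
    have hmem : Icc α β ∈ nhds x := Icc_mem_nhds hxαβ.1 hxαβ.2
    have hd : HasDerivAt ψ (derivWithin ψ (Icc α β) x) x := by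
      rw [derivWithin_of_mem_nhds hmem]
      exact ((hψC1.differentiableOn one_ne_zero x (hsub (Ioo_subset_Icc_self hx))).differentiableAt
        hmem).hasDerivAt
    have hne' : ψ x - t ≠ 0 := sub_ne_zero.2 (hne x (Ioo_subset_Icc_self hx))
    have hF : HasDerivAt (fun y => Real.log (ψ y - t))
        ((ψ x - t)⁻¹ * derivWithin ψ (Icc α β) x) x :=
      by convert (hd.sub_const t).log hne' using 1; ring
    rw [div_eq_inv_mul]
    exact hF.hasDerivWithinAt
  · apply ContinuousOn.intervalIntegrable
    rw [uIcc_of_le huv]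
    exact (hψ'c.mono hsub).div ((hψC1.continuousOn.mono hsub).sub continuousOn_const)
      (fun x hx => sub_ne_zero.2 (hne x hx))

/-- The Cauchy principal value ⨍_α^β ψ'(ξ)/(ψ(ξ)-ψ(τ)) dξ equals log|(b-t)/(a-t)|,
independently of ψ. -/
theorem cpv_transformed_simple_pole
    (a b t α β τ : ℝ) (ψ : ℝ → ℝ)
    (hat : a < t) (htb : t < b) (hατ : α < τ) (hτβ : τ < β)
    (hψC1 : ContDiffOn ℝ 1 ψ (Icc α β))
    (hψα : ψ α = a) (hψβ : ψ β = b)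
    (hψ' : ∀ ξ ∈ Ioo α β, 0 < derivWithin ψ (Icc α β) ξ)
    (hψτ : ψ τ = t) :
    Tendsto (fun ε : ℝ =>
        (∫ ξ in α..(τ - ε), derivWithin ψ (Icc α β) ξ / (ψ ξ - ψ τ)) +
        ∫ ξ in (τ + ε)..β, derivWithin ψ (Icc α β) ξ / (ψ ξ - ψ τ))
      (nhdsWithin 0 (Set.Ioi 0)) (nhds (Real.log |(b - t) / (a - t)|)) := by
  have hαβ : α < β := hατ.trans hτβ
  have hτmem : τ ∈ Icc α β := ⟨hατ.le, hτβ.le⟩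
  -- strict monotonicity
  have hmono : StrictMonoOn ψ (Icc α β) := by
    apply strictMonoOn_of_deriv_pos (convex_Icc α β) hψC1.continuousOn
    intro x hx
    rw [interior_Icc] at hx
    have hmem : Icc α β ∈ nhds x := Icc_mem_nhds hx.1 hx.2
    rw [← derivWithin_of_mem_nhds hmem]
    exact hψ' x hx
  have hlt : ∀ x ∈ Icc α β, x < τ → ψ x < t := by
    intro x hx hxτ
    have := hmono hx hτmem hxτ
    rwa [hψτ] at this
  have hgt : ∀ x ∈ Icc α β, τ < x → t < ψ x := by
    intro x hx hxτ
    have := hmono hτmem hx hxτ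
    rwa [hψτ] at this
  -- derivative at τ
  set d := derivWithin ψ (Icc α β) τ with hd_def
  have hd0 : 0 < d := hψ' τ ⟨hατ, hτβ⟩
  have hdτ : HasDerivAt ψ d τ := by
    have hmem : Icc α β ∈ nhds τ := Icc_mem_nhds hατ hτβ
    rw [hd_def, derivWithin_of_mem_nhds hmem]
    exact ((hψC1.differentiableOn one_ne_zero τ hτmem).differentiableAt hmem).hasDerivAt
  set δ := min (τ - α) (β - τ) with hδ_def
  have hδ0 : 0 < δ := lt_min (by linarith) (by linarith)
  have hS : Ioo (0:ℝ) δ ∈ nhdsWithin 0 (Set.Ioi 0) :=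
    Ioo_mem_nhdsGT_of_mem ⟨le_rfl, hδ0⟩
  -- eventual formula
  have hNpos : ∀ ε ∈ Ioo (0:ℝ) δ, ψ (τ - ε) - t < 0 := by
    intro ε hε
    have h1 : α ≤ τ - ε := by
      have := hε.2; have := min_le_left (τ - α) (β - τ); simp only [hδ_def] at *; linarith
    have := hlt (τ - ε) ⟨h1, by linarith [hε.1, hτβ]⟩ (by linarith [hε.1])
    linarith
  have hDpos : ∀ ε ∈ Ioo (0:ℝ) δ, 0 < ψ (τ + ε) - t := by
    intro ε hε
    have h1 : τ + ε ≤ β := by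
      have := hε.2; have := min_le_right (τ - α) (β - τ); simp only [hδ_def] at *; linarith
    have := hgt (τ + ε) ⟨by linarith [hε.1, hατ], h1⟩ (by linarith [hε.1])
    linarith
  have key : ∀ ε ∈ Ioo (0:ℝ) δ,
      (∫ ξ in α..(τ - ε), derivWithin ψ (Icc α β) ξ / (ψ ξ - ψ τ)) +
        ∫ ξ in (τ + ε)..β, derivWithin ψ (Icc α β) ξ / (ψ ξ - ψ τ)
      = (Real.log (b - t) - Real.log (a - t))
        + Real.log ((ψ (τ - ε) - t) / (ψ (τ + ε) - t)) := by
    intro ε hε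
    have hε0 := hε.1
    have h1 : α ≤ τ - ε := by
      have := hε.2; have := min_le_left (τ - α) (β - τ); simp only [hδ_def] at *; linarith
    have h2 : τ + ε ≤ β := by
      have := hε.2; have := min_le_right (τ - α) (β - τ); simp only [hδ_def] at *; linarith
    have hI1 : ∫ ξ in α..(τ - ε), derivWithin ψ (Icc α β) ξ / (ψ ξ - ψ τ)
        = Real.log (ψ (τ - ε) - t) - Real.log (ψ α - t) := by
      rw [hψτ]
      apply cpv_seg α β t α (τ - ε) ψ hαβ hψC1 h1
      · intro x hx; exact ⟨hx.1, by linarith [hx.2]⟩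
      · intro x hx
        have := hlt x ⟨hx.1, by linarith [hx.2]⟩ (by linarith [hx.2])
        exact ne_of_lt this
    have hI2 : ∫ ξ in (τ + ε)..β, derivWithin ψ (Icc α β) ξ / (ψ ξ - ψ τ)
        = Real.log (ψ β - t) - Real.log (ψ (τ + ε) - t) := by
      rw [hψτ]
      apply cpv_seg α β t (τ + ε) β ψ hαβ hψC1 h2
      · intro x hx; exact ⟨by linarith [hx.1], hx.2⟩
      · intro x hx
        have := hgt x ⟨by linarith [hx.1], hx.2⟩ (by linarith [hx.1])
        exact (ne_of_lt this).symm
    rw [hI1, hI2, hψα, hψβ]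
    rw [Real.log_div (ne_of_lt (hNpos ε hε)) (ne_of_gt (hDpos ε hε))]
    ring
  -- the ratio tends to -1
  have hslope := hasDerivAt_iff_tendsto_slope.1 hdτ
  have hm : Tendsto (fun ε : ℝ => τ - ε) (nhdsWithin 0 (Set.Ioi 0)) (nhdsWithin τ {τ}ᶜ) := by
    rw [tendsto_nhdsWithin_iff]
    constructor
    · have : Tendsto (fun ε : ℝ => τ - ε) (nhds 0) (nhds (τ - 0)) :=
        (continuous_const.sub continuous_id).tendsto 0
      simpa using this.mono_left nhdsWithin_le_nhds
    · filter_upwards [self_mem_nhdsWithin] with ε (hε : (0:ℝ) < ε)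
      simp only [mem_compl_iff, mem_singleton_iff]
      intro h; linarith [sub_eq_self.1 h]
  have hp : Tendsto (fun ε : ℝ => τ + ε) (nhdsWithin 0 (Set.Ioi 0)) (nhdsWithin τ {τ}ᶜ) := by
    rw [tendsto_nhdsWithin_iff]
    constructor
    · have : Tendsto (fun ε : ℝ => τ + ε) (nhds 0) (nhds (τ + 0)) :=
        (continuous_const.add continuous_id).tendsto 0
      simpa using this.mono_left nhdsWithin_le_nhds
    · filter_upwards [self_mem_nhdsWithin] with ε (hε : (0:ℝ) < ε)
      simp only [mem_compl_iff, mem_singleton_iff]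
      intro h; linarith [add_eq_left.1 h]
  have hs1 : Tendsto (fun ε : ℝ => slope ψ τ (τ - ε)) (nhdsWithin 0 (Set.Ioi 0)) (nhds d) :=
    hslope.comp hm
  have hs2 : Tendsto (fun ε : ℝ => slope ψ τ (τ + ε)) (nhdsWithin 0 (Set.Ioi 0)) (nhds d) :=
    hslope.comp hp
  have hratio0 : Tendsto (fun ε : ℝ => -(slope ψ τ (τ - ε) / slope ψ τ (τ + ε)))
      (nhdsWithin 0 (Set.Ioi 0)) (nhds (-(d / d))) := (hs1.div hs2 (ne_of_gt hd0)).neg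
  have hratio : Tendsto (fun ε : ℝ => (ψ (τ - ε) - t) / (ψ (τ + ε) - t))
      (nhdsWithin 0 (Set.Ioi 0)) (nhds (-1)) := by
    rw [div_self (ne_of_gt hd0)] at hratio0
    apply hratio0.congr'
    filter_upwards [hS] with ε hε
    have hε0 : ε ≠ 0 := ne_of_gt hε.1
    have hD : ψ (τ + ε) - t ≠ 0 := ne_of_gt (hDpos ε hε)
    simp only [slope_def_field, hψτ]
    have e1 : τ - ε - τ = -ε := by ring
    have e2 : τ + ε - τ = ε := by ring
    rw [e1, e2]
    field_simp
  have hlog : Tendsto (fun ε : ℝ => Real.log ((ψ (τ - ε) - t) / (ψ (τ + ε) - t)))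
      (nhdsWithin 0 (Set.Ioi 0)) (nhds 0) := by
    have := (Real.continuousAt_log (by norm_num : (-1:ℝ) ≠ 0)).tendsto.comp hratio
    simpa [Function.comp_def] using this
  have hfinal : Tendsto (fun ε : ℝ =>
      (Real.log (b - t) - Real.log (a - t))
        + Real.log ((ψ (τ - ε) - t) / (ψ (τ + ε) - t)))
      (nhdsWithin 0 (Set.Ioi 0)) (nhds ((Real.log (b - t) - Real.log (a - t)) + 0)) :=
    tendsto_const_nhds.add hlog
  have hval : Real.log |(b - t) / (a - t)| = (Real.log (b - t) - Real.log (a - t)) + 0 := by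
    rw [Real.log_abs, Real.log_div (sub_ne_zero.2 (ne_of_gt htb)) (sub_ne_zero.2 (ne_of_lt hat)), add_zero]
  rw [hval]
  apply hfinal.congr'
  filter_upwards [hS] with ε hε
  exact (key ε hε).symm
end

section
/- Let a < t < b, let k ≥ 2 be an integer, and let ψ : [α,β] → [a,b] be C^k with ψ(α)=a, ψ(β)=b, ψ'(ξ)>0 on (α,β), and let τ ∈ (α,β) satisfy ψ(τ)=t. Then the Hadamard finite part of ∫_α^β ψ'(ξ)/(ψ(ξ)-ψ(τ))^k dξ equals (1/(k-1))·[1/(a-t)^{k-1} - 1/(b-t)^{k-1}], independently of ψ. -/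
open Filter Real intervalIntegral Set
open Polynomial Topology

lemma polyEval_contDiff (p : Polynomial ℝ) {n : WithTop ℕ∞} : ContDiff ℝ n fun x => p.eval x := by
  induction p using Polynomial.induction_on' with
  | add p q hp hq => simpa [eval_add] using hp.add hq
  | monomial i a => simpa [eval_monomial] using contDiff_const.mul (contDiff_id.pow i)

lemma aux_coef_zero {c : ℝ} (h : (fun x : ℝ => x * c) =o[nhds 0] fun x => x) : c = 0 := by
  by_contra hc
  have h2 := h.def (by positivity : (0:ℝ) < |c| / 2)
  rw [Metric.eventually_nhds_iff] at h2
  obtain ⟨r, hr, h3⟩ := h2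
  have hdist : dist (r/2) (0:ℝ) < r := by
    rw [Real.dist_eq, sub_zero, abs_of_pos (by linarith)]; linarith
  have := h3 hdist
  rw [Real.norm_eq_abs, Real.norm_eq_abs, abs_mul, abs_of_pos (by linarith : (0:ℝ) < r/2)] at this
  have hcpos : 0 < |c| := abs_pos.mpr hc
  nlinarith

lemma pow_isBigO_id_nhds_zero (n : ℕ) : (fun h : ℝ => h ^ (n+1)) =O[nhds 0] fun h => h := by
  rw [Asymptotics.isBigO_iff]
  refine ⟨1, ?_⟩
  rw [Metric.eventually_nhds_iff]
  refine ⟨1, one_pos, fun y hy => ?_⟩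
  rw [Real.dist_eq, sub_zero] at hy
  rw [Real.norm_eq_abs, Real.norm_eq_abs, abs_pow, one_mul]
  calc |y| ^ (n+1) ≤ |y| ^ 1 := pow_le_pow_of_le_one (abs_nonneg _) hy.le (by omega)
    _ = |y| := pow_one _

lemma peano_poly : ∀ (n : ℕ) (f : ℝ → ℝ) (U : Set ℝ), IsOpen U → (0:ℝ) ∈ U →
    ContDiffOn ℝ n f U →
    ∃ P : Polynomial ℝ, (fun h : ℝ => f h - P.eval h) =o[nhds 0] fun h => h ^ n := by
  intro n
  induction n with
  | zero =>
    intro f U hU h0 hf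
    refine ⟨C (f 0), ?_⟩
    simp only [eval_C, pow_zero]
    rw [Asymptotics.isLittleO_one_iff]
    have : ContinuousAt f 0 := (hf.continuousOn.continuousAt (hU.mem_nhds h0))
    simpa using this.tendsto.sub_const (f 0)
  | succ n ih =>
    intro f U hU h0 hf
    have hf' : ContDiffOn ℝ n (deriv f) U := by
      exact hf.deriv_of_isOpen hU (by exact_mod_cast le_refl _)
    obtain ⟨P₁, hP₁⟩ := ih (deriv f) U hU h0 hf'
    set P : Polynomial ℝ := C (f 0) +
      ∑ i ∈ Finset.range (P₁.natDegree + 1), C (P₁.coeff i / (i + 1)) * X ^ (i + 1) with hP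
    have hPd : P.derivative = P₁ := by
      rw [hP, derivative_add, derivative_C, zero_add, derivative_sum]
      have : ∀ i ∈ Finset.range (P₁.natDegree + 1),
          derivative (C (P₁.coeff i / (i + 1)) * X ^ (i + 1)) = C (P₁.coeff i) * X ^ i := by
        intro i _
        rw [derivative_C_mul, derivative_X_pow]
        simp only [Nat.add_sub_cancel, Nat.cast_add, Nat.cast_one]
        have hne : ((i:ℝ) + 1) ≠ 0 := by positivity
        rw [← mul_assoc, ← C_mul, div_mul_cancel₀ _ hne]
      rw [Finset.sum_congr rfl this]
      simp_rw [C_mul_X_pow_eq_monomial]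
      exact (P₁.as_sum_range' _ (Nat.lt_succ_self _)).symm
    have hP0 : P.eval 0 = f 0 := by
      simp [hP, eval_finset_sum]
    set g : ℝ → ℝ := fun h => f h - P.eval h with hg
    have hg0 : g 0 = 0 := by simp [hg, hP0]
    refine ⟨P, ?_⟩
    rw [Asymptotics.isLittleO_iff]
    intro c hc
    obtain ⟨r₁, hr₁, hball⟩ := Metric.isOpen_iff.1 hU 0 h0
    have hev : ∀ᶠ y in nhds (0:ℝ), ‖deriv f y - P₁.eval y‖ ≤ c * ‖y ^ n‖ :=
      hP₁.def hc
    obtain ⟨r₂, hr₂, hev⟩ := Metric.eventually_nhds_iff_ball.1 hev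
    have hrmin : (0:ℝ) < min r₁ r₂ := lt_min hr₁ hr₂
    rw [Metric.eventually_nhds_iff_ball]
    refine ⟨min r₁ r₂, hrmin, ?_⟩
    intro h hh
    simp only [Metric.mem_ball, Real.dist_eq, sub_zero] at hh
    have habs : ∀ y ∈ Set.uIcc (0:ℝ) h, |y| ≤ |h| := by
      intro y hy
      rw [Set.uIcc_eq_union] at hy
      rcases hy with hy | hy <;> rw [Set.mem_Icc] at hy <;>
        cases' abs_cases h with hh' hh' <;> cases' abs_cases y with hy' hy' <;> nlinarith
    have hsub : Set.uIcc (0:ℝ) h ⊆ Metric.ball (0:ℝ) (min r₁ r₂) := by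
      intro y hy
      simp only [Metric.mem_ball, Real.dist_eq, sub_zero]
      exact lt_of_le_of_lt (habs y hy) hh
    have hderiv : ∀ y ∈ Set.uIcc (0:ℝ) h,
        HasDerivWithinAt g (deriv f y - P₁.eval y) (Set.uIcc (0:ℝ) h) y := by
      intro y hy
      have hyU : y ∈ U := hball (Metric.ball_subset_ball (min_le_left _ _) (hsub hy))
      have hfd : HasDerivAt f (deriv f y) y := by
        have : DifferentiableOn ℝ f U :=
          hf.differentiableOn (by simp)
        exact ((this y hyU).differentiableAt (hU.mem_nhds hyU)).hasDerivAt
      have hpd : HasDerivAt (fun x => P.eval x) (P₁.eval y) y := by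
        have := P.hasDerivAt y
        rwa [hPd] at this
      exact ((hfd.sub hpd)).hasDerivWithinAt
    have hbound : ∀ y ∈ Set.uIcc (0:ℝ) h, ‖deriv f y - P₁.eval y‖ ≤ c * |h| ^ n := by
      intro y hy
      have h1 := hev y (Metric.ball_subset_ball (min_le_right _ _) (hsub hy))
      calc ‖deriv f y - P₁.eval y‖ ≤ c * ‖y ^ n‖ := h1
        _ ≤ c * |h| ^ n := by
            rw [norm_pow, Real.norm_eq_abs]
            exact mul_le_mul_of_nonneg_left (pow_le_pow_left₀ (abs_nonneg _) (habs y hy) n) hc.le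
    have := Convex.norm_image_sub_le_of_norm_hasDerivWithin_le hderiv hbound
      (convex_uIcc _ _) (Set.left_mem_uIcc) (Set.right_mem_uIcc)
    rw [hg0, sub_zero, sub_zero] at this
    calc ‖g h‖ ≤ c * |h| ^ n * ‖h‖ := this
      _ = c * ‖h ^ (n+1)‖ := by
          rw [Real.norm_eq_abs, Real.norm_eq_abs, abs_pow, pow_succ]
          ring

/-- The Hadamard finite part of ∫_α^β ψ'(ξ)/(ψ(ξ)-ψ(τ))^k dξ, k ≥ 2, equals
(1/(k-1))·[1/(a-t)^{k-1} - 1/(b-t)^{k-1}], independently of ψ.  The finite part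
is obtained by subtracting suitable divergent terms c_j/ε^j from
φ(ε) = ∫_α^{τ-ε} + ∫_{τ+ε}^β and taking ε → 0⁺. -/
theorem hfp_transformed_pole_order_k
    (a b t α β τ : ℝ) (k : ℕ) (hk : 2 ≤ k) (ψ : ℝ → ℝ)
    (hat : a < t) (htb : t < b) (hατ : α < τ) (hτβ : τ < β)
    (hψCk : ContDiffOn ℝ k ψ (Icc α β))
    (hψα : ψ α = a) (hψβ : ψ β = b)
    (hψ' : ∀ ξ ∈ Ioo α β, 0 < derivWithin ψ (Icc α β) ξ)
    (hψτ : ψ τ = t) :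
    ∃ c : ℕ → ℝ,
      Tendsto (fun ε : ℝ =>
          ((∫ ξ in α..(τ - ε), derivWithin ψ (Icc α β) ξ / (ψ ξ - ψ τ) ^ k) +
            ∫ ξ in (τ + ε)..β, derivWithin ψ (Icc α β) ξ / (ψ ξ - ψ τ) ^ k) -
          ∑ j ∈ Finset.Icc 1 (k - 1), c j / ε ^ j)
        (nhdsWithin 0 (Set.Ioi 0))
        (nhds ((1 / (k - 1 : ℝ)) * (1 / (a - t) ^ (k - 1) - 1 / (b - t) ^ (k - 1)))) := by
  obtain ⟨m, rfl⟩ : ∃ m, k = m + 2 := ⟨k - 2, by omega⟩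
  clear hk
  have hαβ : α < β := hατ.trans hτβ
  have hτIoo : τ ∈ Ioo α β := ⟨hατ, hτβ⟩
  have hone_le : (1:WithTop ℕ∞) ≤ ((m+2:ℕ):WithTop ℕ∞) := by exact_mod_cast (by omega : 1 ≤ m + 2)
  have hψdiff : ∀ x ∈ Ioo α β, HasDerivAt ψ (derivWithin ψ (Icc α β) x) x := by
    intro x hx
    have hdo : DifferentiableOn ℝ ψ (Icc α β) := hψCk.differentiableOn (by simp)
    exact ((hdo x (Ioo_subset_Icc_self hx)).hasDerivWithinAt).hasDerivAt
      (Icc_mem_nhds hx.1 hx.2)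
  have hmono : StrictMonoOn ψ (Icc α β) := by
    apply strictMonoOn_of_hasDerivWithinAt_pos (convex_Icc α β) hψCk.continuousOn
      (f' := derivWithin ψ (Icc α β))
    · intro x hx
      rw [interior_Icc] at hx ⊢
      exact (hψdiff x hx).hasDerivWithinAt
    · intro x hx
      rw [interior_Icc] at hx
      exact hψ' x hx
  have hψ'cont : ContinuousOn (derivWithin ψ (Icc α β)) (Icc α β) :=
    hψCk.continuousOn_derivWithin (uniqueDiffOn_Icc hαβ) hone_le
  -- the antiderivative
  set F : ℝ → ℝ := fun ξ => -(((m:ℝ)+1)⁻¹) * ((ψ ξ - ψ τ) ^ (m+1))⁻¹ with hF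
  have key : ∀ p q : ℝ, α ≤ p → p ≤ q → q ≤ β → (∀ ξ ∈ Icc p q, ψ ξ - ψ τ ≠ 0) →
      ∫ ξ in p..q, derivWithin ψ (Icc α β) ξ / (ψ ξ - ψ τ) ^ (m+2) = F q - F p := by
    intro p q hp hpq hq hne
    have hsub : Icc p q ⊆ Icc α β := Icc_subset_Icc hp hq
    have hcont : ContinuousOn (fun ξ => ψ ξ - ψ τ) (Icc p q) :=
      (hψCk.continuousOn.mono hsub).sub continuousOn_const
    have hFcont : ContinuousOn F (Icc p q) := by
      apply ContinuousOn.mul continuousOn_const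
      exact ((hcont.pow (m+1)).inv₀ (fun ξ hξ => pow_ne_zero _ (hne ξ hξ)))
    have hder : ∀ x ∈ Ioo p q,
        HasDerivWithinAt F (derivWithin ψ (Icc α β) x / (ψ x - ψ τ) ^ (m+2)) (Ioi x) x := by
      intro x hx
      have hx' : x ∈ Ioo α β := ⟨lt_of_le_of_lt hp hx.1, lt_of_lt_of_le hx.2 hq⟩
      have h1 : HasDerivAt (fun ξ => ψ ξ - ψ τ) (derivWithin ψ (Icc α β) x) x :=
        (hψdiff x hx').sub_const _
      have hne' : ψ x - ψ τ ≠ 0 := hne x ⟨hx.1.le, hx.2.le⟩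
      have h2 := (h1.pow (m+1)).inv (pow_ne_zero _ hne')
      have h3 := h2.const_mul (-(((m:ℝ)+1))⁻¹)
      have : derivWithin ψ (Icc α β) x / (ψ x - ψ τ) ^ (m+2) =
          -((m:ℝ)+1)⁻¹ * (-(↑(m+1) * (ψ x - ψ τ) ^ (m + 1 - 1) * derivWithin ψ (Icc α β) x) /
            ((ψ x - ψ τ) ^ (m+1)) ^ 2) := by
        simp only [Nat.add_sub_cancel, Nat.cast_add, Nat.cast_one]
        field_simp
        ring
      rw [this]
      exact h3.hasDerivWithinAt
    have hint : IntervalIntegrable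
        (fun ξ => derivWithin ψ (Icc α β) ξ / (ψ ξ - ψ τ) ^ (m+2)) MeasureTheory.volume p q := by
      apply ContinuousOn.intervalIntegrable
      rw [uIcc_of_le hpq]
      exact (hψ'cont.mono hsub).div ((hcont.pow (m+2)))
        (fun ξ hξ => pow_ne_zero _ (hne ξ hξ))
    exact integral_eq_sub_of_hasDeriv_right_of_le hpq hFcont hder hint
  -- Part 3: shifted function and Taylor data
  set fsh : ℝ → ℝ := fun h => ψ (τ + h) - ψ τ with hfsh
  have hU0 : (0:ℝ) ∈ Ioo (α - τ) (β - τ) := ⟨by linarith, by linarith⟩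
  have hfshC : ContDiffOn ℝ (m+2) fsh (Ioo (α - τ) (β - τ)) := by
    have h1 : ContDiffOn ℝ (m+2) (fun h : ℝ => ψ (τ + h)) (Ioo (α - τ) (β - τ)) := by
      apply hψCk.comp ((contDiff_const.add contDiff_id).contDiffOn)
      intro h hh
      exact ⟨by simp only [id]; linarith [hh.1], by simp only [id]; linarith [hh.2]⟩
    exact h1.sub contDiffOn_const
  obtain ⟨P, hrP⟩ := peano_poly (m+2) fsh (Ioo (α - τ) (β - τ)) isOpen_Ioo hU0 hfshC
  set rP : ℝ → ℝ := fun h => fsh h - P.eval h with hrPdef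
  have hfsh0 : fsh 0 = 0 := by simp [hfsh]
  have hP0 : P.eval 0 = 0 := by
    have h2 : Tendsto (fun h : ℝ => h ^ (m+2)) (nhds 0) (nhds 0) := by
      simpa using (continuous_pow (m+2)).tendsto (0:ℝ)
    have h1 : Tendsto rP (nhds 0) (nhds 0) := hrP.isBigO.trans_tendsto h2
    have h3 : Tendsto fsh (nhds 0) (nhds 0) := by
      have := (hfshC.continuousOn.continuousAt (isOpen_Ioo.mem_nhds hU0)).tendsto
      rwa [hfsh0] at this
    have h4 : Tendsto (fun h : ℝ => P.eval h) (nhds 0) (nhds (P.eval 0)) :=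
      P.continuous.tendsto 0
    have h5 : Tendsto (fun h : ℝ => P.eval h) (nhds 0) (nhds 0) := by
      have := h3.sub h1
      simpa [hrPdef] using this
    exact tendsto_nhds_unique h4 h5
  set d : ℝ := derivWithin ψ (Icc α β) τ with hdd
  have hd : 0 < d := hψ' τ hτIoo
  have hfd : HasDerivAt fsh d 0 := by
    have h1 : HasDerivAt (fun h : ℝ => τ + h) 1 0 := by
      simpa using (hasDerivAt_id (0:ℝ)).const_add τ
    have h0 : HasDerivAt ψ d ((fun h : ℝ => τ + h) 0) := by
      simpa using hψdiff τ hτIoo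
    have h2 := h0.comp 0 h1
    have h3 := h2.sub_const (ψ τ)
    simpa [hfsh] using h3
  have hP'0 : P.derivative.eval 0 = d := by
    have hgd := hfd.sub (P.hasDerivAt 0)
    rw [hasDerivAt_iff_isLittleO] at hgd
    have hgd' : (fun h : ℝ => rP h - h * (d - P.derivative.eval 0)) =o[nhds 0] fun h => h := by
      refine hgd.congr' ?_ ?_
      · filter_upwards with x
        simp only [hrPdef, Pi.sub_apply, hfsh0, hP0, smul_eq_mul, sub_zero]
      · filter_upwards with x
        simp
    have hrP1 : rP =o[nhds 0] (fun h : ℝ => h) :=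
      hrP.trans_isBigO (pow_isBigO_id_nhds_zero (m+1))
    have hlin : (fun h : ℝ => h * (d - P.derivative.eval 0)) =o[nhds 0] fun h => h := by
      have := hrP1.sub hgd'
      refine this.congr' ?_ ?_
      · filter_upwards with h; ring
      · filter_upwards with h; rfl
    have := aux_coef_zero hlin
    linarith
  set S : Polynomial ℝ := P.divX with hSdef
  have hPX : P = S * X := by
    conv_lhs => rw [← P.divX_mul_X_add]
    rw [coeff_zero_eq_eval_zero, hP0]
    simp
    rfl
  have hPS : ∀ x : ℝ, P.eval x = x * S.eval x := by
    intro x; rw [hPX]; simp [mul_comm]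
  have hS0 : S.eval 0 = d := by
    have h1 : P.derivative.eval 0 = S.eval 0 := by
      rw [hPX, derivative_mul, derivative_X]; simp
    rw [← h1, hP'0]
  -- expansion of the inverse power of S
  set A : ℝ → ℝ := fun x => ((S.eval x) ^ (m+1))⁻¹ with hAdef
  have hUAopen : IsOpen {x : ℝ | S.eval x ≠ 0} := by
    have : {x : ℝ | S.eval x ≠ 0} = (fun x => S.eval x) ⁻¹' ({0}ᶜ) := rfl
    rw [this]
    exact isOpen_compl_singleton.preimage S.continuous
  have hUA0 : (0:ℝ) ∈ {x : ℝ | S.eval x ≠ 0} := by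
    simp only [mem_setOf_eq, hS0]
    exact ne_of_gt hd
  have hAC : ContDiffOn ℝ (m+1) A {x : ℝ | S.eval x ≠ 0} := by
    apply ContDiffOn.inv
    · exact ((polyEval_contDiff S).pow (m+1)).contDiffOn
    · intro x hx; exact pow_ne_zero _ hx
  obtain ⟨Q, hrQ⟩ := peano_poly (m+1) A {x : ℝ | S.eval x ≠ 0} hUAopen hUA0 hAC
  -- the punctured filter
  set l : Filter ℝ := nhdsWithin 0 {x : ℝ | x ≠ 0} with hldef
  have hmeml : ∀ᶠ x in l, x ≠ 0 := by
    have := self_mem_nhdsWithin (s := {x : ℝ | x ≠ 0}) (a := (0:ℝ))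
    exact this
  set gfun : ℝ → ℝ := fun x => ((ψ (τ + x) - ψ τ) ^ (m+1))⁻¹ with hgfun
  set ρ : ℝ → ℝ := fun x => x ^ (m+1) * gfun x - Q.eval x with hρdef
  set W : ℝ → ℝ := fun x => fsh x / x with hWdef
  have hrdiv : Tendsto (fun x => rP x / x) (nhds 0) (nhds 0) :=
    (hrP.trans_isBigO (pow_isBigO_id_nhds_zero (m+1))).tendsto_div_nhds_zero
  have hWd : Tendsto W l (nhds d) := by
    have hS : Tendsto (fun x : ℝ => S.eval x) (nhds 0) (nhds d) := by
      have := S.continuous.tendsto 0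
      rwa [hS0] at this
    have h1 : Tendsto (fun x : ℝ => S.eval x + rP x / x) (nhds 0) (nhds d) := by
      simpa using hS.add hrdiv
    apply Tendsto.congr' ?_ (h1.mono_left nhdsWithin_le_nhds)
    filter_upwards [hmeml] with x hx0
    show S.eval x + rP x / x = fsh x / x
    rw [hrPdef]
    field_simp
    rw [hPS x]
    ring
  have hrw : (fun x => rP x / x) =o[l] fun x => x ^ (m+1) := by
    rw [Asymptotics.isLittleO_iff]
    intro c hc
    filter_upwards [(hrP.def hc).filter_mono nhdsWithin_le_nhds, hmeml] with x h1 hx0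
    have hxabs : (0:ℝ) < |x| := abs_pos.mpr hx0
    rw [Real.norm_eq_abs, Real.norm_eq_abs, abs_div, abs_pow]
    rw [Real.norm_eq_abs, Real.norm_eq_abs, abs_pow] at h1
    rw [div_le_iff₀ hxabs]
    calc |rP x| ≤ c * |x| ^ (m+2) := h1
      _ = c * |x| ^ (m+1) * |x| := by rw [pow_succ]; ring
  have hSl : Tendsto (fun x : ℝ => S.eval x) l (nhds d) := by
    have := S.continuous.tendsto 0
    rw [hS0] at this
    exact this.mono_left nhdsWithin_le_nhds
  have hW0 : ∀ᶠ x in l, W x ≠ 0 := hWd.eventually_ne (ne_of_gt hd)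
  have hSne : ∀ᶠ x in l, S.eval x ≠ 0 := hSl.eventually_ne (ne_of_gt hd)
  have hWS : (fun x => W x - S.eval x) =o[l] fun x => x ^ (m+1) := by
    refine hrw.congr' ?_ (EventuallyEq.refl _ _)
    filter_upwards [hmeml] with x hx0
    show rP x / x = W x - S.eval x
    rw [hrPdef, hWdef]
    field_simp
    rw [hPS x]
  set G : ℝ → ℝ := fun x =>
    -(∑ i ∈ Finset.range (m+1), S.eval x ^ i * W x ^ (m - i)) /
      (W x ^ (m+1) * S.eval x ^ (m+1)) with hGdef
  have hGlim : Tendsto G l (nhds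
      (-(∑ i ∈ Finset.range (m+1), d ^ i * d ^ (m - i)) / (d ^ (m+1) * d ^ (m+1)))) := by
    apply Tendsto.div
    · exact (tendsto_finset_sum _ (fun i _ => (hSl.pow i).mul (hWd.pow (m - i)))).neg
    · exact (hWd.pow (m+1)).mul (hSl.pow (m+1))
    · exact mul_ne_zero (pow_ne_zero _ (ne_of_gt hd)) (pow_ne_zero _ (ne_of_gt hd))
  have hGO : G =O[l] (fun _ => (1:ℝ)) := hGlim.isBigO_one ℝ
  have hF1 : (fun x => (W x ^ (m+1))⁻¹ - A x) =o[l] fun x => x ^ (m+1) := by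
    have hmul := hWS.mul_isBigO hGO
    have hmul' : (fun x => (W x - S.eval x) * G x) =o[l] fun x => x ^ (m+1) := by
      refine hmul.trans_isBigO ?_
      apply Asymptotics.isBigO_of_le
      intro x
      simp
    refine hmul'.congr' ?_ (EventuallyEq.refl _ _)
    filter_upwards [hW0, hSne] with x hW hS
    have hgeom := geom_sum₂_mul (S.eval x) (W x) (m+1)
    simp only [Nat.add_sub_cancel] at hgeom
    show (W x - S.eval x) * G x = (W x ^ (m+1))⁻¹ - A x
    rw [hGdef, hAdef]
    have h1 : (W x ^ (m+1))⁻¹ - (S.eval x ^ (m+1))⁻¹ =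
        (S.eval x ^ (m+1) - W x ^ (m+1)) / (W x ^ (m+1) * S.eval x ^ (m+1)) := by
      field_simp
    dsimp only
    rw [h1, ← hgeom]
    field_simp
    ring
  have hρo : ρ =o[l] fun x => x ^ (m+1) := by
    have hQl : (fun x => A x - Q.eval x) =o[l] fun x => x ^ (m+1) :=
      hrQ.mono nhdsWithin_le_nhds
    have hsum := hF1.add hQl
    refine hsum.congr' ?_ (EventuallyEq.refl _ _)
    filter_upwards [hmeml] with x hx0
    show (W x ^ (m+1))⁻¹ - A x + (A x - Q.eval x) = ρ x
    have hfshW : fsh x = x * W x := by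
      rw [hWdef]; field_simp
    have hxg : x ^ (m+1) * gfun x = (W x ^ (m+1))⁻¹ := by
      rw [hgfun]
      dsimp only
      have : ψ (τ + x) - ψ τ = fsh x := rfl
      rw [this, hfshW, mul_pow, mul_inv, ← mul_assoc,
        mul_inv_cancel₀ (pow_ne_zero _ hx0), one_mul]
    rw [hρdef]
    dsimp only
    rw [hxg]
    ring
  have hρdiv : Tendsto (fun x => ρ x / x ^ (m+1)) l (nhds 0) :=
    hρo.tendsto_div_nhds_zero
  -- Part 4: the reflected polynomial and its tail
  set Qd : Polynomial ℝ := ∑ i ∈ Finset.range (Q.natDegree + 1),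
    C (Q.coeff i * (1 - (-1:ℝ) ^ (m+1+i))) * X ^ i with hQddef
  have hQdeval : ∀ x : ℝ, Qd.eval x = Q.eval x - (-1:ℝ) ^ (m+1) * Q.eval (-x) := by
    intro x
    rw [hQddef, eval_finset_sum]
    simp only [eval_mul, eval_C, eval_pow, eval_X]
    have h1 : ∀ i ∈ Finset.range (Q.natDegree + 1),
        Q.coeff i * (1 - (-1:ℝ) ^ (m+1+i)) * x ^ i =
          Q.coeff i * x ^ i - (-1:ℝ) ^ (m+1) * (Q.coeff i * (-x) ^ i) := by
      intro i _
      have h2 : (-x) ^ i = (-1:ℝ) ^ i * x ^ i := by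
        rw [neg_pow]
      rw [h2, pow_add]
      ring
    rw [Finset.sum_congr rfl h1, Finset.sum_sub_distrib, ← Finset.mul_sum]
    rw [← Polynomial.eval_eq_sum_range, ← Polynomial.eval_eq_sum_range]
  have hQdco : ∀ j : ℕ, Qd.coeff j =
      if j ∈ Finset.range (Q.natDegree + 1) then Q.coeff j * (1 - (-1:ℝ) ^ (m+1+j)) else 0 := by
    intro j
    rw [hQddef, finset_sum_coeff]
    simp only [coeff_C_mul, coeff_X_pow, mul_ite, mul_one, mul_zero]
    rw [Finset.sum_ite_eq (Finset.range (Q.natDegree + 1)) j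
      (fun i => Q.coeff i * (1 - (-1:ℝ) ^ (m+1+i)))]
  have hQdm1 : Qd.coeff (m+1) = 0 := by
    rw [hQdco]
    split
    · have h1 : (-1:ℝ) ^ (m+1+(m+1)) = 1 := Even.neg_one_pow ⟨m+1, rfl⟩
      rw [h1]
      ring
    · rfl
  set Tail : Polynomial ℝ := Qd - ∑ i ∈ Finset.range (m+2), C (Qd.coeff i) * X ^ i with hTaildef
  obtain ⟨V, hV⟩ : X ^ (m+2) ∣ Tail := by
    rw [Polynomial.X_pow_dvd_iff]
    intro i hi
    rw [hTaildef, coeff_sub]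
    have h2 : (∑ i ∈ Finset.range (m+2), C (Qd.coeff i) * X ^ i).coeff i = Qd.coeff i := by
      rw [finset_sum_coeff]
      simp only [coeff_C_mul, coeff_X_pow, mul_ite, mul_one, mul_zero]
      rw [Finset.sum_ite_eq (Finset.range (m+2)) i (fun i => Qd.coeff i)]
      simp [Finset.mem_range.mpr hi]
    rw [h2, sub_self]
  -- the coefficients
  refine ⟨fun j => (((m:ℝ)+1))⁻¹ * Qd.coeff (m+1-j), ?_⟩
  set c : ℕ → ℝ := fun j => (((m:ℝ)+1))⁻¹ * Qd.coeff (m+1-j) with hcdef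
  set Lv : ℝ := ((m:ℝ)+1)⁻¹ * ((a-t)^(m+1))⁻¹ - ((m:ℝ)+1)⁻¹ * ((b-t)^(m+1))⁻¹ with hLvdef
  have hLeq : (1 / ((↑(m+2):ℝ) - 1)) * (1 / (a - t) ^ (m + 2 - 1) - 1 / (b - t) ^ (m + 2 - 1))
      = Lv := by
    rw [show m + 2 - 1 = m + 1 from rfl, hLvdef]
    push_cast
    simp only [one_div]
    ring
  have hLeq' : (1:ℝ) / ((↑(m+2):ℝ) - 1) * (1 / (a - t) ^ (m + 1) - 1 / (b - t) ^ (m + 1)) = Lv :=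
    hLeq
  rw [show ((m:ℕ)+2) - 1 = m + 1 from rfl, hLeq']
  -- Part 5: assembly
  have hl'le : nhdsWithin (0:ℝ) (Ioi 0) ≤ l :=
    nhdsWithin_mono 0 (fun x hx => ne_of_gt hx)
  have hneg : Tendsto (fun ε : ℝ => -ε) (nhdsWithin (0:ℝ) (Ioi 0)) l := by
    apply tendsto_nhdsWithin_of_tendsto_nhds_of_eventually_within
    · have h1 : Tendsto (fun ε : ℝ => -ε) (nhds 0) (nhds (0:ℝ)) := by
        simpa using (continuous_neg.tendsto (0:ℝ))
      exact h1.mono_left nhdsWithin_le_nhds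
    · filter_upwards [self_mem_nhdsWithin] with x hx
      have hx' : (0:ℝ) < x := hx
      show -x ∈ {y : ℝ | y ≠ 0}
      simp only [mem_setOf_eq, neg_ne_zero]
      exact ne_of_gt hx'
  have t1 : Tendsto (fun ε => ρ ε / ε ^ (m+1)) (nhdsWithin (0:ℝ) (Ioi 0)) (nhds 0) :=
    hρdiv.mono_left hl'le
  have t2 : Tendsto (fun ε : ℝ => ρ (-ε) / (-ε) ^ (m+1)) (nhdsWithin (0:ℝ) (Ioi 0)) (nhds 0) :=
    hρdiv.comp hneg
  have t3 : Tendsto (fun ε : ℝ => ε * V.eval ε) (nhdsWithin (0:ℝ) (Ioi 0)) (nhds 0) := by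
    have h1 : Tendsto (fun ε : ℝ => ε * V.eval ε) (nhds 0) (nhds (0 * V.eval 0)) :=
      (continuous_id.mul V.continuous).tendsto 0
    have := h1.mono_left (nhdsWithin_le_nhds (s := Ioi (0:ℝ)))
    simpa using this
  have hModT : Tendsto (fun ε : ℝ => Lv + ((((m:ℝ)+1)⁻¹ *
      (ρ ε / ε ^ (m+1) - ρ (-ε) / (-ε) ^ (m+1)))
      + ((m:ℝ)+1)⁻¹ * (ε * V.eval ε))) (nhdsWithin (0:ℝ) (Ioi 0)) (nhds Lv) := by
    have h1 := (((t1.sub t2).const_mul (((m:ℝ)+1)⁻¹)).add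
      ((t3.const_mul (((m:ℝ)+1)⁻¹)))).const_add Lv
    simpa using h1
  refine Tendsto.congr' ?_ hModT
  have hmin : (0:ℝ) < min (τ - α) (β - τ) := lt_min (by linarith) (by linarith)
  have hsm : ∀ᶠ ε in nhdsWithin (0:ℝ) (Ioi 0), ε < min (τ - α) (β - τ) := by
    have h1 : ∀ᶠ ε in nhds (0:ℝ), ε < min (τ - α) (β - τ) := Filter.Tendsto.eventually_lt_const hmin
      tendsto_id
    exact h1.filter_mono nhdsWithin_le_nhds
  filter_upwards [self_mem_nhdsWithin, hsm] with ε hεmem hεm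
  have hε0 : (0:ℝ) < ε := hεmem
  have hεα : ε < τ - α := lt_of_lt_of_le hεm (min_le_left _ _)
  have hεβ : ε < β - τ := lt_of_lt_of_le hεm (min_le_right _ _)
  have hne1 : ∀ ξ ∈ Icc α (τ - ε), ψ ξ - ψ τ ≠ 0 := by
    intro ξ hξ
    have hξβ : ξ ∈ Icc α β := ⟨hξ.1, by linarith [hξ.2]⟩
    have h1 : ψ ξ < ψ τ := hmono hξβ (Ioo_subset_Icc_self hτIoo) (by linarith [hξ.2])
    linarith
  have hne2 : ∀ ξ ∈ Icc (τ + ε) β, ψ ξ - ψ τ ≠ 0 := by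
    intro ξ hξ
    have hξβ : ξ ∈ Icc α β := ⟨by linarith [hξ.1], hξ.2⟩
    have h1 : ψ τ < ψ ξ := hmono (Ioo_subset_Icc_self hτIoo) hξβ (by linarith [hξ.1])
    linarith
  have hI1 := key α (τ - ε) le_rfl (by linarith) (by linarith) hne1
  have hI2 := key (τ + ε) β (by linarith) (by linarith) le_rfl hne2
  rw [hI1, hI2]
  have hεne : ε ≠ 0 := ne_of_gt hε0
  have hεpne : (ε:ℝ) ^ (m+1) ≠ 0 := pow_ne_zero _ hεne
  have hεnne : ((-ε):ℝ) ^ (m+1) ≠ 0 := pow_ne_zero _ (neg_ne_zero.mpr hεne)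
  have hgp : gfun ε = (Q.eval ε + ρ ε) / ε ^ (m+1) := by
    rw [hρdef]
    dsimp only
    field_simp
    ring
  have hgm : gfun (-ε) = (Q.eval (-ε) + ρ (-ε)) / (-ε) ^ (m+1) := by
    rw [hρdef]
    dsimp only
    field_simp
    ring
  have hFβα : F β - F α = Lv := by
    rw [hF, hLvdef]
    dsimp only
    rw [hψβ, hψα, hψτ]
    ring
  have hFmp : F (τ - ε) - F (τ + ε) = ((m:ℝ)+1)⁻¹ * (gfun ε - gfun (-ε)) := by
    rw [hF, hgfun]
    dsimp only
    rw [show τ + -ε = τ - ε by ring]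
    ring
  have hsumeq : ∑ j ∈ Finset.Icc 1 (m+1), c j / ε ^ j =
      ∑ i ∈ Finset.range (m+1), ((m:ℝ)+1)⁻¹ * (Qd.coeff i * ε ^ i / ε ^ (m+1)) := by
    apply Finset.sum_nbij' (i := fun j => m + 1 - j) (j := fun i => m + 1 - i)
    · intro j hj
      rw [Finset.mem_Icc] at hj
      rw [Finset.mem_range]
      omega
    · intro i hi
      rw [Finset.mem_range] at hi
      rw [Finset.mem_Icc]
      omega
    · intro j hj
      rw [Finset.mem_Icc] at hj
      omega
    · intro i hi
      rw [Finset.mem_range] at hi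
      omega
    · intro j hj
      rw [Finset.mem_Icc] at hj
      rw [hcdef]
      dsimp only
      rw [show ε ^ (m+1) = ε ^ (m + 1 - j) * ε ^ j by rw [← pow_add]; congr 1; omega]
      rw [mul_div_assoc]
      congr 1
      rw [mul_comm (ε ^ (m+1-j)) (ε ^ j), mul_div_mul_right _ _ (pow_ne_zero _ hεne)]
  have hQdiff : Q.eval ε / ε ^ (m+1) - Q.eval (-ε) / (-ε) ^ (m+1) = Qd.eval ε / ε ^ (m+1) := by
    rw [hQdeval ε]
    have hnp : ((-ε):ℝ) ^ (m+1) = (-1:ℝ) ^ (m+1) * ε ^ (m+1) := by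
      rw [neg_pow]
    rcases neg_one_pow_eq_or ℝ (m+1) with h | h
    · rw [hnp, h, one_mul, one_mul, sub_div]
    · rw [hnp, h, neg_one_mul, neg_one_mul, div_neg, sub_neg_eq_add, sub_neg_eq_add, add_div]
  have hTailev : Qd.eval ε - ∑ i ∈ Finset.range (m+1), Qd.coeff i * ε ^ i
      = ε ^ (m+2) * V.eval ε := by
    have h1 : Tail.eval ε = Qd.eval ε - ∑ i ∈ Finset.range (m+2), Qd.coeff i * ε ^ i := by
      rw [hTaildef, eval_sub]
      congr 1
      rw [eval_finset_sum]
      apply Finset.sum_congr rfl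
      intro i _
      rw [eval_mul, eval_C, eval_pow, eval_X]
    have h2 : ∑ i ∈ Finset.range (m+2), Qd.coeff i * ε ^ i
        = (∑ i ∈ Finset.range (m+1), Qd.coeff i * ε ^ i) + Qd.coeff (m+1) * ε ^ (m+1) :=
      Finset.sum_range_succ _ _
    have h3 : Tail.eval ε = ε ^ (m+2) * V.eval ε := by
      rw [hV]
      simp [eval_mul, eval_pow]
    rw [← h3, h1, h2, hQdm1]
    ring
  have hmain : (Q.eval ε + ρ ε) / ε ^ (m+1) - (Q.eval (-ε) + ρ (-ε)) / (-ε) ^ (m+1)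
      - (∑ i ∈ Finset.range (m+1), Qd.coeff i * ε ^ i) / ε ^ (m+1)
      = (ρ ε / ε ^ (m+1) - ρ (-ε) / (-ε) ^ (m+1)) + ε * V.eval ε := by
    have e2 := hQdiff
    have e3 : Q.eval (-ε) / (-ε) ^ (m+1) = Q.eval ε / ε ^ (m+1) - Qd.eval ε / ε ^ (m+1) := by
      linarith
    have e1 : Qd.eval ε = (∑ i ∈ Finset.range (m+1), Qd.coeff i * ε ^ i)
        + ε ^ (m+1) * (ε * V.eval ε) := by
      rw [show ε ^ (m+1) * (ε * V.eval ε) = ε ^ (m+2) * V.eval ε by ring]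
      linarith [hTailev]
    rw [add_div, add_div, e3, e1, add_div, mul_div_cancel_left₀ _ hεpne]
    ring
  rw [show (F (τ - ε) - F α) + (F β - F (τ + ε)) = (F β - F α) + (F (τ - ε) - F (τ + ε)) by ring]
  rw [hFβα, hFmp, hgp, hgm, hsumeq]
  rw [show ∑ i ∈ Finset.range (m+1), ((m:ℝ)+1)⁻¹ * (Qd.coeff i * ε ^ i / ε ^ (m+1))
      = ((m:ℝ)+1)⁻¹ * ((∑ i ∈ Finset.range (m+1), Qd.coeff i * ε ^ i) / ε ^ (m+1)) by
    rw [Finset.sum_div, Finset.mul_sum]]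
  linear_combination (-(((m:ℝ)+1)⁻¹)) * hmain
end

section
/- With notation as above and assuming g and ψ are twice continuously differentiable near t and τ respectively, the function G(ξ)=g(ψ(ξ))ψ'(ξ)/(ψ[ξ,τ])^m satisfies G'(τ) = g'(t)/[ψ'(τ)]^{m-2} + (1 - m/2)·g(t)ψ''(τ)/[ψ'(τ)]^m. -/
open Filter Real Set Topology

/-- G'(τ) = g'(t)/ψ'(τ)^{m-2} + (1 - m/2)·g(t)ψ''(τ)/ψ'(τ)^m for
G(ξ) = g(ψ(ξ))ψ'(ξ)/(ψ[ξ,τ])^m. -/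
theorem G_derivative_at_tau
    (t τ : ℝ) (m : ℕ) (hm : 1 ≤ m) (g ψ G : ℝ → ℝ)
    (hg : ContDiffAt ℝ 2 g t)
    (hψ : ContDiffAt ℝ 2 ψ τ)
    (hmono : StrictMono ψ)
    (hψτ : ψ τ = t) (hψ' : 0 < deriv ψ τ)
    (hG : ∀ ξ, ξ ≠ τ → G ξ = g (ψ ξ) * deriv ψ ξ / ((ψ ξ - ψ τ) / (ξ - τ)) ^ m)
    (hGτ : G τ = g t / (deriv ψ τ) ^ ((m : ℤ) - 1)) :
    deriv G τ = deriv g t / (deriv ψ τ) ^ ((m : ℤ) - 2) +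
      (1 - (m : ℝ) / 2) * g t * deriv (deriv ψ) τ / (deriv ψ τ) ^ m := by
  set a := deriv ψ τ with ha
  set b := deriv (deriv ψ) τ with hb
  have ha0 : a ≠ 0 := ne_of_gt hψ'
  -- ψ is differentiable in a neighborhood of τ
  have hev : ∀ᶠ x in 𝓝 τ, ContDiffAt ℝ 2 ψ x := hψ.eventually (by norm_num)
  have hψdiff : ∀ᶠ x in 𝓝 τ, HasDerivAt ψ (deriv ψ x) x :=
    hev.mono fun x hx => (hx.differentiableAt (by norm_num)).hasDerivAt
  have hψa : HasDerivAt ψ a τ := (hψ.differentiableAt (by norm_num)).hasDerivAt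
  -- deriv ψ is C¹ at τ
  have hψ'C : ContDiffAt ℝ 1 (deriv ψ) τ := by
    have h1 : ContDiffAt ℝ 1 (fderiv ℝ ψ) τ := hψ.fderiv_right (by norm_num)
    have h2 : deriv ψ = fun x => (fderiv ℝ ψ x) 1 := by funext x; rfl
    rw [h2]
    exact (ContinuousLinearMap.apply ℝ ℝ (1 : ℝ)).contDiff.contDiffAt.comp τ h1
  have hψ'' : HasDerivAt (deriv ψ) b τ := (hψ'C.differentiableAt one_ne_zero).hasDerivAt
  -- the slope function φ
  set φ : ℝ → ℝ := fun ξ => if ξ = τ then a else (ψ ξ - ψ τ) / (ξ - τ) with hφdef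
  have hφτ : φ τ = a := by simp [hφdef]
  have hφne : ∀ ξ, ξ ≠ τ → φ ξ = (ψ ξ - ψ τ) / (ξ - τ) := by
    intro ξ hξ; simp [hφdef, hξ]
  -- key limit via L'Hôpital
  have hslope : Tendsto (fun x => (ψ x - ψ τ - a * (x - τ)) / (x - τ) ^ 2)
      (𝓝[≠] τ) (𝓝 (b / 2)) := by
    apply HasDerivAt.lhopital_zero_nhdsNE
      (f' := fun x => deriv ψ x - a) (g' := fun x => 2 * (x - τ))
    · filter_upwards [nhdsWithin_le_nhds hψdiff] with x hx
      simpa using (hx.sub_const (ψ τ)).fun_sub (((hasDerivAt_id x).sub_const τ).const_mul a)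
    · filter_upwards with x
      have := ((hasDerivAt_id x).sub_const τ).fun_pow 2
      simpa [mul_comm] using this
    · filter_upwards [self_mem_nhdsWithin] with x hx
      have : x - τ ≠ 0 := sub_ne_zero.mpr hx
      positivity
    · apply tendsto_nhdsWithin_of_tendsto_nhds
      have : Tendsto (fun x => ψ x - ψ τ - a * (x - τ)) (𝓝 τ) (𝓝 (ψ τ - ψ τ - a * (τ - τ))) := by
        exact ((hψ.continuousAt.sub tendsto_const_nhds).sub
          ((continuous_id.sub continuous_const).tendsto τ |>.const_mul a))
      simpa using this
    · apply tendsto_nhdsWithin_of_tendsto_nhds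
      have : Tendsto (fun x : ℝ => (x - τ) ^ 2) (𝓝 τ) (𝓝 ((τ - τ) ^ 2)) :=
        ((continuous_id.sub continuous_const).pow 2).tendsto τ
      simpa using this
    · have hsl : Tendsto (slope (deriv ψ) τ) (𝓝[≠] τ) (𝓝 b) :=
        hasDerivAt_iff_tendsto_slope.mp hψ''
      have : Tendsto (fun x => slope (deriv ψ) τ x / 2) (𝓝[≠] τ) (𝓝 (b / 2)) :=
        hsl.div_const 2
      apply this.congr
      intro x
      rw [slope_def_field, div_div, mul_comm]
  -- φ has derivative b/2 at τ
  have hφ' : HasDerivAt φ (b / 2) τ := by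
    rw [hasDerivAt_iff_tendsto_slope]
    apply hslope.congr'
    filter_upwards [self_mem_nhdsWithin] with x hx
    have hx' : (x : ℝ) - τ ≠ 0 := sub_ne_zero.mpr hx
    rw [slope_def_field, hφτ, hφne x hx]
    field_simp
  -- the global formula F
  set F : ℝ → ℝ := fun ξ => g (ψ ξ) * deriv ψ ξ / (φ ξ) ^ m with hFdef
  have hGF : G = F := by
    funext ξ
    by_cases hξ : ξ = τ
    · subst hξ
      rw [hGτ, hFdef]
      simp only [hφτ, hψτ]
      rw [zpow_sub₀ ha0, zpow_one, zpow_natCast]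
      field_simp
      rfl
    · rw [hG ξ hξ, hFdef]; simp only [hφne ξ hξ]
  -- derivative of numerator
  have hgt : HasDerivAt g (deriv g t) t := (hg.differentiableAt (by norm_num)).hasDerivAt
  have hN : HasDerivAt (fun ξ => g (ψ ξ) * deriv ψ ξ)
      (deriv g t * a * a + g t * b) τ := by
    have hcomp : HasDerivAt (fun ξ => g (ψ ξ)) (deriv g t * a) τ := by
      have hgt' : HasDerivAt g (deriv g t) (ψ τ) := by rw [hψτ]; exact hgt
      have := hgt'.comp τ hψa
      exact this
    have := hcomp.fun_mul hψ''
    simpa [hψτ] using this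
  -- derivative of denominator
  have hD : HasDerivAt (fun ξ => (φ ξ) ^ m) ((m : ℝ) * a ^ (m - 1) * (b / 2)) τ := by
    have := hφ'.fun_pow m
    simpa [hφτ] using this
  have hDne : (φ τ) ^ m ≠ 0 := by rw [hφτ]; exact pow_ne_zero _ ha0
  have hF : HasDerivAt F
      (((deriv g t * a * a + g t * b) * (φ τ) ^ m -
        g (ψ τ) * deriv ψ τ * ((m : ℝ) * a ^ (m - 1) * (b / 2))) / ((φ τ) ^ m) ^ 2) τ :=
    hN.div hD hDne
  rw [hGF, hF.deriv]
  obtain ⟨k, rfl⟩ : ∃ k, m = k + 1 := ⟨m - 1, (Nat.succ_pred_eq_of_pos hm).symm⟩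
  rw [hφτ, hψτ, ← ha]
  have hz : a ^ ((k + 1 : ℕ) : ℤ) - 2 = a ^ ((k + 1 : ℕ) : ℤ) - 2 := rfl
  rw [show ((k + 1 : ℕ) : ℤ) - 2 = (k : ℤ) - 1 by push_cast; ring,
    zpow_sub₀ ha0, zpow_one, zpow_natCast]
  simp only [Nat.add_sub_cancel]
  push_cast
  field_simp
  ring
end

section
/- Let m ≥ 1 be odd, g ∈ C^1(a,b) integrable at the endpoints, a<t<b, and f(x)=g(x)/|x-t|. For m=1 and any C¹ strictly increasing change of variable ψ:[α,β]→[a,b] with ψ(α)=a, ψ(β)=b, ψ'>0 on (α,β), ψ(τ)=t, the Hadamard finite parts satisfy ⨎_α^β f(ψ(ξ))ψ'(ξ)dξ = ⨎_a^b f(x)dx − 2 g(t) log ψ'(τ), where ⨎_a^b f(x)dx = ∫_a^b [g(x)−g(t)]/|x−t| dx + g(t)·log|(a−t)(b−t)|. -/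
open Filter Real intervalIntegral Set
open MeasureTheory


lemma aux_intlogL {t u v : ℝ} (h1 : u ≤ v) (h2 : v < t) :
    ∫ x in u..v, (t - x)⁻¹ = Real.log (t - u) - Real.log (t - v) := by
  have h3 : 0 < t - v := sub_pos.mpr h2
  have h4 : 0 < t - u := sub_pos.mpr (lt_of_le_of_lt h1 h2)
  rw [show (fun x => (t - x)⁻¹) = (fun x => (fun y : ℝ => y⁻¹) (t - x)) from rfl,
    intervalIntegral.integral_comp_sub_left (fun y : ℝ => y⁻¹) t,
    integral_inv_of_pos h3 h4, Real.log_div h4.ne' h3.ne']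

lemma aux_intlogR {t u v : ℝ} (h1 : t < u) (h2 : u ≤ v) :
    ∫ x in u..v, (x - t)⁻¹ = Real.log (v - t) - Real.log (u - t) := by
  have h3 : 0 < u - t := sub_pos.mpr h1
  have h4 : 0 < v - t := sub_pos.mpr (lt_of_lt_of_le h1 h2)
  rw [show (fun x => (x - t)⁻¹) = (fun x => (fun y : ℝ => y⁻¹) (x - t)) from rfl,
    intervalIntegral.integral_comp_sub_right (fun y : ℝ => y⁻¹) t,
    integral_inv_of_pos h3 h4, Real.log_div h4.ne' h3.ne']


lemma aux_h_integrable (a b t : ℝ) (g f : ℝ → ℝ)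
    (hat : a < t) (htb : t < b)
    (hg : ContDiffOn ℝ 1 g (Ioo a b))
    (hf : ∀ x, f x = g x / |x - t|)
    (hInta : ∀ a', a < a' → a' < t → IntervalIntegrable f MeasureTheory.volume a a')
    (hIntb : ∀ b', t < b' → b' < b → IntervalIntegrable f MeasureTheory.volume b' b) :
    IntervalIntegrable (fun x => (g x - g t) / |x - t|) MeasureTheory.volume a b := by
  set h : ℝ → ℝ := fun x => (g x - g t) / |x - t| with hh
  have hgc : ContinuousOn g (Ioo a b) := hg.continuousOn
  have ht : t ∈ Ioo a b := ⟨hat, htb⟩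
  -- derivative of g at t, giving a bound on the slope near t
  have hdiff : DifferentiableAt ℝ g t :=
    (hg.differentiableOn one_ne_zero t ht).differentiableAt (Ioo_mem_nhds hat htb)
  have hslope : Tendsto (slope g t) (nhdsWithin t {t}ᶜ) (nhds (deriv g t)) :=
    hasDerivAt_iff_tendsto_slope.mp hdiff.hasDerivAt
  set C : ℝ := |deriv g t| + 1 with hC
  have hCpos : 0 < C := by positivity
  have hev : ∀ᶠ x in nhdsWithin t {t}ᶜ, |slope g t x| < C :=
    (hslope.abs).eventually_lt_const (by simp [hC])
  have hev2 : ∀ᶠ x in nhds t, x ∈ Ioo a b ∧ (x ≠ t → |slope g t x| < C) :=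
    (Filter.eventually_iff.mpr (by exact Ioo_mem_nhds hat htb)).and
      (eventually_nhdsWithin_iff.mp hev)
  obtain ⟨l, r, ⟨hl, hr⟩, hsub⟩ := mem_nhds_iff_exists_Ioo_subset.mp hev2
  -- choose interior points c < t < d
  set c : ℝ := max ((l + t) / 2) ((a + t) / 2) with hc
  set d : ℝ := min ((t + r) / 2) ((t + b) / 2) with hd
  have hlc : l < c := lt_max_of_lt_left (by linarith)
  have hac : a < c := lt_max_of_lt_right (by linarith)
  have hct : c < t := max_lt (by linarith) (by linarith)
  have htd : t < d := lt_min (by linarith) (by linarith)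
  have hdr : d < r := min_lt_of_left_lt (by linarith)
  have hdb : d < b := min_lt_of_right_lt (by linarith)
  -- integrability on [c, d] : bounded measurable
  have hmeas : AEStronglyMeasurable h (volume.restrict (Ioc c d)) := by
    have hsub2 : Ioc c d ⊆ Ioo a b := fun x hx => ⟨hac.trans hx.1, lt_of_le_of_lt hx.2 hdb⟩
    have m1 : AEStronglyMeasurable (fun x => g x - g t) (volume.restrict (Ioc c d)) :=
      ((hgc.mono hsub2).sub continuousOn_const).aestronglyMeasurable measurableSet_Ioc
    have m2 : AEStronglyMeasurable (fun x : ℝ => (|x - t|)⁻¹) (volume.restrict (Ioc c d)) :=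
      (((measurable_id.sub_const t).abs).inv).aestronglyMeasurable
    have : h = fun x => (g x - g t) * (|x - t|)⁻¹ := by
      funext x; simp [hh, div_eq_mul_inv]
    rw [this]; exact m1.mul m2
  have hbound : ∀ᵐ x ∂(volume.restrict (Ioc c d)), ‖h x‖ ≤ C := by
    refine ae_restrict_of_forall_mem measurableSet_Ioc fun x hx => ?_
    have hx2 : x ∈ Ioo l r := ⟨hlc.trans hx.1, lt_of_le_of_lt hx.2 hdr⟩
    by_cases hxt : x = t
    · simp [hh, hxt, hCpos.le]
    · have := (hsub hx2).2 hxt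
      have hslopeq : |slope g t x| = ‖h x‖ := by
        rw [slope_def_field]
        simp only [hh, Real.norm_eq_abs, abs_div, abs_abs]
      rw [← hslopeq]; exact this.le
  have hint_cd : IntervalIntegrable h volume c d := by
    rw [intervalIntegrable_iff_integrableOn_Ioc_of_le (hct.trans htd).le]
    exact Integrable.mono' (integrable_const C) hmeas hbound
  -- pointwise decomposition f = h + g t / |x - t|
  have hfh : ∀ x, h x = f x - g t / |x - t| := by
    intro x
    rw [hf x, hh]
    simp only
    rw [div_sub_div_same]
  -- integrability on [a, c]
  have hint_ac : IntervalIntegrable h volume a c := by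
    have h1 : IntervalIntegrable f volume a c := hInta c hac hct
    have h2 : IntervalIntegrable (fun x => g t / |x - t|) volume a c := by
      apply ContinuousOn.intervalIntegrable
      apply continuousOn_const.div (continuous_abs.comp (continuous_id.sub continuous_const)).continuousOn
      intro x hx
      rw [uIcc_of_le hac.le] at hx
      have : x < t := lt_of_le_of_lt hx.2 hct
      exact abs_ne_zero.mpr (sub_ne_zero.mpr this.ne)
    have : h = fun x => f x - g t / |x - t| := funext hfh
    rw [this]; exact h1.sub h2
  have hint_db : IntervalIntegrable h volume d b := by
    have h1 : IntervalIntegrable f volume d b := hIntb d htd hdb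
    have h2 : IntervalIntegrable (fun x => g t / |x - t|) volume d b := by
      apply ContinuousOn.intervalIntegrable
      apply continuousOn_const.div (continuous_abs.comp (continuous_id.sub continuous_const)).continuousOn
      intro x hx
      rw [uIcc_of_le hdb.le] at hx
      have : t < x := lt_of_lt_of_le htd hx.1
      exact abs_ne_zero.mpr (sub_ne_zero.mpr this.ne')
    have : h = fun x => f x - g t / |x - t| := funext hfh
    rw [this]; exact h1.sub h2
  exact (hint_ac.trans hint_cd).trans hint_db

/-- For f(x) = g(x)/|x-t| the Hadamard finite part is NOT invariant under a
variable transformation: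
⨎_α^β f(ψ(ξ))ψ'(ξ)dξ = ⨎_a^b f(x)dx − 2g(t)·log ψ'(τ), where
⨎_a^b f(x)dx = ∫_a^b [g(x)−g(t)]/|x−t| dx + g(t)·log|(a−t)(b−t)|.
The finite parts are realized as lim_{ε→0⁺}[φ(ε) + 2g(t)log ε]. -/
theorem hfp_abs_singularity_not_invariant
    (a b t α β τ : ℝ) (g ψ : ℝ → ℝ)
    (hat : a < t) (htb : t < b) (hατ : α < τ) (hτβ : τ < β)
    (hg : ContDiffOn ℝ 1 g (Ioo a b))
    (f : ℝ → ℝ) (hf : ∀ x, f x = g x / |x - t|)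
    (hInta : ∀ a', a < a' → a' < t → IntervalIntegrable f MeasureTheory.volume a a')
    (hIntb : ∀ b', t < b' → b' < b → IntervalIntegrable f MeasureTheory.volume b' b)
    (hψC1 : ContDiffOn ℝ 1 ψ (Icc α β))
    (hmono : StrictMonoOn ψ (Icc α β))
    (hψα : ψ α = a) (hψβ : ψ β = b)
    (hψ' : ∀ ξ ∈ Ioo α β, 0 < derivWithin ψ (Icc α β) ξ)
    (hψτ : ψ τ = t) :
    Tendsto (fun ε : ℝ =>
        ((∫ x in a..(t - ε), f x) + ∫ x in (t + ε)..b, f x) + 2 * g t * Real.log ε)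
      (nhdsWithin 0 (Set.Ioi 0))
      (nhds ((∫ x in a..b, (g x - g t) / |x - t|) +
        g t * Real.log |(a - t) * (b - t)|)) ∧
    Tendsto (fun ε : ℝ =>
        ((∫ ξ in α..(τ - ε), f (ψ ξ) * derivWithin ψ (Icc α β) ξ) +
          ∫ ξ in (τ + ε)..β, f (ψ ξ) * derivWithin ψ (Icc α β) ξ) +
          2 * g t * Real.log ε)
      (nhdsWithin 0 (Set.Ioi 0))
      (nhds (((∫ x in a..b, (g x - g t) / |x - t|) +
        g t * Real.log |(a - t) * (b - t)|) -
        2 * g t * Real.log (derivWithin ψ (Icc α β) τ))) := by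
  have hab : a < b := hat.trans htb
  set D : ℝ → ℝ := derivWithin ψ (Icc α β) with hD
  set h : ℝ → ℝ := fun x => (g x - g t) / |x - t| with hh
  have hintab : IntervalIntegrable h volume a b :=
    aux_h_integrable a b t g f hat htb hg hf hInta hIntb
  have hIntH : ∀ u v, u ∈ Icc a b → v ∈ Icc a b → IntervalIntegrable h volume u v := by
    intro u v hu hv
    exact hintab.mono_set (uIcc_subset_uIcc (by rwa [uIcc_of_le hab.le]) (by rwa [uIcc_of_le hab.le]))
  set Φ : ℝ → ℝ := fun s => ∫ x in a..s, h x with hΦ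
  have hΦcont : ContinuousWithinAt Φ (Icc a b) t := by
    apply intervalIntegral.continuousWithinAt_primitive (measure_singleton t)
    rw [min_self, max_eq_right hab.le]; exact hintab
  -- pointwise decomposition
  have hfh : ∀ x, f x = h x + g t / |x - t| := by
    intro x; rw [hf x, hh]; simp only; rw [← add_div, sub_add_cancel]
  -- left-side integral formula
  have EqL : ∀ c, a < c → c < t →
      (∫ x in a..c, f x) = Φ c + g t * (Real.log (t - a) - Real.log (t - c)) := by
    intro c hac hct
    have h1 : IntervalIntegrable h volume a c :=
      hIntH a c ⟨le_rfl, hab.le⟩ ⟨hac.le, (hct.trans htb).le⟩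
    have h2 : IntervalIntegrable (fun x => g t / |x - t|) volume a c := by
      apply ContinuousOn.intervalIntegrable
      apply continuousOn_const.div
        (continuous_abs.comp (continuous_id.sub continuous_const)).continuousOn
      intro x hx
      rw [uIcc_of_le hac.le] at hx
      exact abs_ne_zero.mpr (sub_ne_zero.mpr (lt_of_le_of_lt hx.2 hct).ne)
    calc (∫ x in a..c, f x) = ∫ x in a..c, (h x + g t / |x - t|) := by
          apply intervalIntegral.integral_congr; intro x _; exact hfh x
      _ = Φ c + ∫ x in a..c, g t / |x - t| := by rw [intervalIntegral.integral_add h1 h2]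
      _ = Φ c + g t * (Real.log (t - a) - Real.log (t - c)) := by
          congr 1
          rw [show (∫ x in a..c, g t / |x - t|) = ∫ x in a..c, g t * (t - x)⁻¹ from
            intervalIntegral.integral_congr (fun x hx => by
              rw [uIcc_of_le hac.le] at hx
              rw [abs_of_neg (sub_neg.mpr (lt_of_le_of_lt hx.2 hct)), neg_sub, div_eq_mul_inv]),
            intervalIntegral.integral_const_mul, aux_intlogL hac.le hct]
  -- right-side integral formula
  have EqR : ∀ c, t < c → c < b →
      (∫ x in c..b, f x) = (Φ b - Φ c) + g t * (Real.log (b - t) - Real.log (c - t)) := by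
    intro c htc hcb
    have h1 : IntervalIntegrable h volume c b :=
      hIntH c b ⟨(hat.trans htc).le, hcb.le⟩ ⟨hab.le, le_rfl⟩
    have h2 : IntervalIntegrable (fun x => g t / |x - t|) volume c b := by
      apply ContinuousOn.intervalIntegrable
      apply continuousOn_const.div
        (continuous_abs.comp (continuous_id.sub continuous_const)).continuousOn
      intro x hx
      rw [uIcc_of_le hcb.le] at hx
      exact abs_ne_zero.mpr (sub_ne_zero.mpr (lt_of_lt_of_le htc hx.1).ne')
    have hsplit : Φ c + ∫ x in c..b, h x = Φ b :=
      intervalIntegral.integral_add_adjacent_intervals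
        (hIntH a c ⟨le_rfl, hab.le⟩ ⟨(hat.trans htc).le, hcb.le⟩) h1
    calc (∫ x in c..b, f x) = ∫ x in c..b, (h x + g t / |x - t|) := by
          apply intervalIntegral.integral_congr; intro x _; exact hfh x
      _ = (∫ x in c..b, h x) + ∫ x in c..b, g t / |x - t| := intervalIntegral.integral_add h1 h2
      _ = (Φ b - Φ c) + g t * (Real.log (b - t) - Real.log (c - t)) := by
          rw [show (∫ x in c..b, h x) = Φ b - Φ c by linarith]
          congr 1
          rw [show (∫ x in c..b, g t / |x - t|) = ∫ x in c..b, g t * (x - t)⁻¹ from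
            intervalIntegral.integral_congr (fun x hx => by
              rw [uIcc_of_le hcb.le] at hx
              rw [abs_of_pos (sub_pos.mpr (lt_of_lt_of_le htc hx.1)), div_eq_mul_inv]),
            intervalIntegral.integral_const_mul, aux_intlogR htc hcb.le]
  -- limits of Φ(t∓ε)
  have hΦL : Tendsto (fun ε => Φ (t - ε)) (nhdsWithin 0 (Set.Ioi 0)) (nhds (Φ t)) := by
    apply hΦcont.tendsto.comp
    rw [tendsto_nhdsWithin_iff]
    constructor
    · have : Tendsto (fun ε : ℝ => t - ε) (nhds 0) (nhds (t - 0)) :=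
        (continuous_const.sub continuous_id).tendsto 0
      simpa using this.mono_left nhdsWithin_le_nhds
    · filter_upwards [Ioo_mem_nhdsGT_of_mem ⟨le_rfl, sub_pos.mpr hat⟩] with ε hε
      exact ⟨by linarith [hε.2], by linarith [hε.1, htb]⟩
  have hΦR : Tendsto (fun ε => Φ (t + ε)) (nhdsWithin 0 (Set.Ioi 0)) (nhds (Φ t)) := by
    apply hΦcont.tendsto.comp
    rw [tendsto_nhdsWithin_iff]
    constructor
    · have : Tendsto (fun ε : ℝ => t + ε) (nhds 0) (nhds (t + 0)) :=
        (continuous_const.add continuous_id).tendsto 0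
      simpa using this.mono_left nhdsWithin_le_nhds
    · filter_upwards [Ioo_mem_nhdsGT_of_mem ⟨le_rfl, sub_pos.mpr htb⟩] with ε hε
      exact ⟨by linarith [hε.1, hat], by linarith [hε.2]⟩
  have hlogab : Real.log (t - a) + Real.log (b - t) = Real.log |(a - t) * (b - t)| := by
    rw [← Real.log_mul (sub_pos.mpr hat).ne' (sub_pos.mpr htb).ne']
    congr 1
    rw [abs_mul, abs_of_neg (sub_neg.mpr hat), abs_of_pos (sub_pos.mpr htb), neg_sub]
  constructor
  · -- Part 1
    have hε0m : (0:ℝ) < min (t - a) (b - t) := lt_min (sub_pos.mpr hat) (sub_pos.mpr htb)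
    have hev : ∀ᶠ ε in nhdsWithin (0:ℝ) (Set.Ioi 0),
        Φ (t - ε) + (Φ b - Φ (t + ε)) + g t * (Real.log (t - a) + Real.log (b - t))
        = ((∫ x in a..(t - ε), f x) + ∫ x in (t + ε)..b, f x) + 2 * g t * Real.log ε := by
      filter_upwards [Ioo_mem_nhdsGT_of_mem ⟨le_rfl, hε0m⟩] with ε hε
      have hε1 : 0 < ε := hε.1
      have hε2 : ε < t - a := lt_of_lt_of_le hε.2 (min_le_left _ _)
      have hε3 : ε < b - t := lt_of_lt_of_le hε.2 (min_le_right _ _)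
      rw [EqL (t - ε) (by linarith) (by linarith), EqR (t + ε) (by linarith) (by linarith)]
      rw [show t - (t - ε) = ε by ring, show t + ε - t = ε by ring]
      ring
    have lim : Tendsto (fun ε => Φ (t - ε) + (Φ b - Φ (t + ε))
          + g t * (Real.log (t - a) + Real.log (b - t)))
        (nhdsWithin (0:ℝ) (Set.Ioi 0))
        (nhds (Φ t + (Φ b - Φ t) + g t * (Real.log (t - a) + Real.log (b - t)))) :=
      (hΦL.add (tendsto_const_nhds.sub hΦR)).add tendsto_const_nhds
    have heq : Φ t + (Φ b - Φ t) + g t * (Real.log (t - a) + Real.log (b - t))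
        = (∫ x in a..b, h x) + g t * Real.log |(a - t) * (b - t)| := by
      rw [hlogab]; show _ = Φ b + _; ring
    exact (heq ▸ lim).congr' hev
  · -- Part 2
    have hψcont : ContinuousOn ψ (Icc α β) := hψC1.continuousOn
    have hαβ : α < β := hατ.trans hτβ
    have himage : ∀ u v, α ≤ u → u ≤ v → v ≤ β → ψ '' Ioo u v = Ioo (ψ u) (ψ v) := by
      intro u v h1 h2 h3
      apply Subset.antisymm
      · rintro _ ⟨x, hx, rfl⟩
        exact ⟨hmono ⟨h1, h2.trans h3⟩ ⟨h1.trans hx.1.le, hx.2.le.trans h3⟩ hx.1,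
               hmono ⟨(h1.trans_lt hx.1).le, hx.2.le.trans h3⟩ ⟨h1.trans h2, h3⟩ hx.2⟩
      · exact intermediate_value_Ioo h2 (hψcont.mono (Icc_subset_Icc h1 h3))
    have CoV : ∀ u v, α ≤ u → u < v → v ≤ β →
        (∫ ξ in u..v, f (ψ ξ) * D ξ) = ∫ x in (ψ u)..(ψ v), f x := by
      intro u v h1 h2 h3
      have hsubIcc : Ioo u v ⊆ Icc α β := fun y hy => ⟨h1.trans hy.1.le, hy.2.le.trans h3⟩
      have hody : ∀ x ∈ Ioo u v, HasDerivWithinAt ψ (D x) (Ioo u v) x := fun x hx =>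
        ((hψC1.differentiableOn one_ne_zero x (hsubIcc hx)).hasDerivWithinAt).mono hsubIcc
      have hinj : InjOn ψ (Ioo u v) := (hmono.injOn).mono hsubIcc
      have key := integral_image_eq_integral_abs_deriv_smul measurableSet_Ioo hody hinj f
      rw [himage u v h1 h2.le h3] at key
      have hψuv : ψ u ≤ ψ v := (hmono ⟨h1, h2.le.trans h3⟩ ⟨h1.trans h2.le, h3⟩ h2).le
      rw [integral_of_le hψuv, integral_of_le h2.le,
          MeasureTheory.integral_Ioc_eq_integral_Ioo, MeasureTheory.integral_Ioc_eq_integral_Ioo,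
          key]
      apply MeasureTheory.setIntegral_congr_fun measurableSet_Ioo
      intro x hx
      have hDx : 0 < D x := hψ' x ⟨h1.trans_lt hx.1, hx.2.trans_le h3⟩
      simp [abs_of_pos hDx, mul_comm]
    have hDτ : 0 < D τ := hψ' τ ⟨hατ, hτβ⟩
    have hτmem : Icc α β ∈ nhds τ := Icc_mem_nhds hατ hτβ
    have hdiffτ : DifferentiableAt ℝ ψ τ :=
      (hψC1.differentiableOn one_ne_zero τ ⟨hατ.le, hτβ.le⟩).differentiableAt hτmem
    have hDeq : D τ = deriv ψ τ := derivWithin_of_mem_nhds hτmem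
    have hder : HasDerivAt ψ (D τ) τ := hDeq ▸ hdiffτ.hasDerivAt
    have hslopeψ : Tendsto (slope ψ τ) (nhdsWithin τ {τ}ᶜ) (nhds (D τ)) :=
      hasDerivAt_iff_tendsto_slope.mp hder
    have hmapL : Tendsto (fun ε : ℝ => τ - ε) (nhdsWithin 0 (Set.Ioi 0))
        (nhdsWithin τ {τ}ᶜ) := by
      rw [tendsto_nhdsWithin_iff]
      constructor
      · have : Tendsto (fun ε : ℝ => τ - ε) (nhds 0) (nhds (τ - 0)) :=
          (continuous_const.sub continuous_id).tendsto 0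
        simpa using this.mono_left nhdsWithin_le_nhds
      · filter_upwards [self_mem_nhdsWithin] with ε (hε : 0 < ε)
        simp only [Set.mem_compl_iff, Set.mem_singleton_iff]
        intro hcon; linarith [sub_eq_self.mp hcon ▸ hε]
    have hmapR : Tendsto (fun ε : ℝ => τ + ε) (nhdsWithin 0 (Set.Ioi 0))
        (nhdsWithin τ {τ}ᶜ) := by
      rw [tendsto_nhdsWithin_iff]
      constructor
      · have : Tendsto (fun ε : ℝ => τ + ε) (nhds 0) (nhds (τ + 0)) :=
          (continuous_const.add continuous_id).tendsto 0
        simpa using this.mono_left nhdsWithin_le_nhds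
      · filter_upwards [self_mem_nhdsWithin] with ε (hε : 0 < ε)
        simp only [Set.mem_compl_iff, Set.mem_singleton_iff]
        intro hcon; linarith [add_eq_left.mp hcon ▸ hε]
    have hquotL : Tendsto (fun ε : ℝ => (t - ψ (τ - ε)) / ε) (nhdsWithin 0 (Set.Ioi 0))
        (nhds (D τ)) := by
      apply (hslopeψ.comp hmapL).congr
      intro ε
      show slope ψ τ (τ - ε) = _
      rw [slope_def_field, hψτ, show τ - ε - τ = -ε by ring, div_neg, ← neg_div, neg_sub]
    have hquotR : Tendsto (fun ε : ℝ => (ψ (τ + ε) - t) / ε) (nhdsWithin 0 (Set.Ioi 0))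
        (nhds (D τ)) := by
      apply (hslopeψ.comp hmapR).congr
      intro ε
      show slope ψ τ (τ + ε) = _
      rw [slope_def_field, hψτ, show τ + ε - τ = ε by ring]
    have hlogL : Tendsto (fun ε : ℝ => Real.log ((t - ψ (τ - ε)) / ε))
        (nhdsWithin 0 (Set.Ioi 0)) (nhds (Real.log (D τ))) :=
      ((Real.continuousAt_log hDτ.ne').tendsto).comp hquotL
    have hlogR : Tendsto (fun ε : ℝ => Real.log ((ψ (τ + ε) - t) / ε))
        (nhdsWithin 0 (Set.Ioi 0)) (nhds (Real.log (D τ))) :=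
      ((Real.continuousAt_log hDτ.ne').tendsto).comp hquotR
    have hψτat : ContinuousAt ψ τ := hψcont.continuousAt hτmem
    have hEmem : Ioo (0:ℝ) (min (τ - α) (β - τ)) ∈ nhdsWithin (0:ℝ) (Set.Ioi 0) :=
      Ioo_mem_nhdsGT_of_mem ⟨le_rfl, lt_min (sub_pos.mpr hατ) (sub_pos.mpr hτβ)⟩
    -- basic facts for ε in E
    have hbasic : ∀ ε ∈ Ioo (0:ℝ) (min (τ - α) (β - τ)),
        a < ψ (τ - ε) ∧ ψ (τ - ε) < t ∧ t < ψ (τ + ε) ∧ ψ (τ + ε) < b := by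
      intro ε hε
      have hε1 : 0 < ε := hε.1
      have hε2 : ε < τ - α := lt_of_lt_of_le hε.2 (min_le_left _ _)
      have hε3 : ε < β - τ := lt_of_lt_of_le hε.2 (min_le_right _ _)
      have m1 : τ - ε ∈ Icc α β := ⟨by linarith, by linarith⟩
      have m2 : τ + ε ∈ Icc α β := ⟨by linarith, by linarith⟩
      refine ⟨?_, ?_, ?_, ?_⟩
      · rw [← hψα]; exact hmono ⟨le_rfl, hαβ.le⟩ m1 (by linarith)
      · rw [← hψτ]; exact hmono m1 ⟨hατ.le, hτβ.le⟩ (by linarith)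
      · rw [← hψτ]; exact hmono ⟨hατ.le, hτβ.le⟩ m2 (by linarith)
      · rw [← hψβ]; exact hmono m2 ⟨hαβ.le, le_rfl⟩ (by linarith)
    have hψL : Tendsto (fun ε : ℝ => ψ (τ - ε)) (nhdsWithin 0 (Set.Ioi 0))
        (nhdsWithin t (Icc a b)) := by
      rw [tendsto_nhdsWithin_iff]
      constructor
      · have base : Tendsto (fun ε : ℝ => τ - ε) (nhdsWithin 0 (Set.Ioi 0)) (nhds τ) := by
          have : Tendsto (fun ε : ℝ => τ - ε) (nhds 0) (nhds (τ - 0)) :=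
            (continuous_const.sub continuous_id).tendsto 0
          simpa using this.mono_left nhdsWithin_le_nhds
        have := hψτat.tendsto.comp base
        rwa [hψτ] at this
      · filter_upwards [hEmem] with ε hε
        obtain ⟨q1, q2, _, _⟩ := hbasic ε hε
        exact ⟨q1.le, (q2.trans htb).le⟩
    have hψR : Tendsto (fun ε : ℝ => ψ (τ + ε)) (nhdsWithin 0 (Set.Ioi 0))
        (nhdsWithin t (Icc a b)) := by
      rw [tendsto_nhdsWithin_iff]
      constructor
      · have base : Tendsto (fun ε : ℝ => τ + ε) (nhdsWithin 0 (Set.Ioi 0)) (nhds τ) := by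
          have : Tendsto (fun ε : ℝ => τ + ε) (nhds 0) (nhds (τ + 0)) :=
            (continuous_const.add continuous_id).tendsto 0
          simpa using this.mono_left nhdsWithin_le_nhds
        have := hψτat.tendsto.comp base
        rwa [hψτ] at this
      · filter_upwards [hEmem] with ε hε
        obtain ⟨_, _, q3, q4⟩ := hbasic ε hε
        exact ⟨(hat.trans q3).le, q4.le⟩
    have limΦψL : Tendsto (fun ε : ℝ => Φ (ψ (τ - ε))) (nhdsWithin 0 (Set.Ioi 0))
        (nhds (Φ t)) := hΦcont.tendsto.comp hψL
    have limΦψR : Tendsto (fun ε : ℝ => Φ (ψ (τ + ε))) (nhdsWithin 0 (Set.Ioi 0))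
        (nhds (Φ t)) := hΦcont.tendsto.comp hψR
    -- eventual identity
    have hev : ∀ᶠ ε in nhdsWithin (0:ℝ) (Set.Ioi 0),
        Φ (ψ (τ - ε)) + (Φ b - Φ (ψ (τ + ε)))
          + g t * (Real.log (t - a) + Real.log (b - t))
          - g t * (Real.log ((t - ψ (τ - ε)) / ε) + Real.log ((ψ (τ + ε) - t) / ε))
        = ((∫ ξ in α..(τ - ε), f (ψ ξ) * D ξ) + ∫ ξ in (τ + ε)..β, f (ψ ξ) * D ξ)
          + 2 * g t * Real.log ε := by
      filter_upwards [hEmem] with ε hε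
      obtain ⟨q1, q2, q3, q4⟩ := hbasic ε hε
      have hε1 : 0 < ε := hε.1
      have hε2 : ε < τ - α := lt_of_lt_of_le hε.2 (min_le_left _ _)
      have hε3 : ε < β - τ := lt_of_lt_of_le hε.2 (min_le_right _ _)
      rw [show (∫ ξ in α..(τ - ε), f (ψ ξ) * D ξ) = ∫ x in (ψ α)..(ψ (τ - ε)), f x from
            CoV α (τ - ε) le_rfl (by linarith) (by linarith),
          show (∫ ξ in (τ + ε)..β, f (ψ ξ) * D ξ) = ∫ x in (ψ (τ + ε))..(ψ β), f x from
            CoV (τ + ε) β (by linarith) (by linarith) le_rfl,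
          hψα, hψβ, EqL (ψ (τ - ε)) q1 q2, EqR (ψ (τ + ε)) q3 q4,
          Real.log_div (sub_pos.mpr q2).ne' hε1.ne',
          Real.log_div (sub_pos.mpr q3).ne' hε1.ne']
      ring
    have lim : Tendsto (fun ε : ℝ => Φ (ψ (τ - ε)) + (Φ b - Φ (ψ (τ + ε)))
          + g t * (Real.log (t - a) + Real.log (b - t))
          - g t * (Real.log ((t - ψ (τ - ε)) / ε) + Real.log ((ψ (τ + ε) - t) / ε)))
        (nhdsWithin (0:ℝ) (Set.Ioi 0))
        (nhds (Φ t + (Φ b - Φ t) + g t * (Real.log (t - a) + Real.log (b - t))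
          - g t * (Real.log (D τ) + Real.log (D τ)))) :=
      (((limΦψL.add (tendsto_const_nhds.sub limΦψR)).add tendsto_const_nhds).sub
        ((hlogL.add hlogR).const_mul (g t)))
    have heq : Φ t + (Φ b - Φ t) + g t * (Real.log (t - a) + Real.log (b - t))
          - g t * (Real.log (D τ) + Real.log (D τ))
        = ((∫ x in a..b, h x) + g t * Real.log |(a - t) * (b - t)|)
          - 2 * g t * Real.log (D τ) := by
      rw [hlogab]; show _ = Φ b + _ - _; ring
    exact (heq ▸ lim).congr' hev
end

section
/- Let p ≥ 1, w ∈ C^{p-1}[a,b] with w^{(p)} absolutely integrable on [a,b], and suppose w^{(i)}(a)=w^{(i)}(b)=0 for i=0,1,…,p−1. Let h=(b−a)/n. Then |h·Σ_{j=1}^{n−1} w(a+jh) − ∫_a^b w(x)dx| ≤ C_p·h^p, where C_p = (1/p!)·(max_{0≤z≤1}|B_p(z)|)·∫_a^b |w^{(p)}(x)|dx and B_p is the p-th Bernoulli polynomial. -/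
open Filter Real intervalIntegral Set MeasureTheory

lemma bern_hasDerivAt (k : ℕ) (c h : ℝ) (hh : h ≠ 0) (y : ℝ) :
    HasDerivAt (fun z : ℝ => h ^ (k+1) / (Nat.factorial (k+1) : ℝ) *
        Polynomial.aeval ((z - c) / h) (Polynomial.bernoulli (k+1)))
      (h ^ k / (Nat.factorial k : ℝ) *
        Polynomial.aeval ((y - c) / h) (Polynomial.bernoulli k)) y := by
  have hg : HasDerivAt (fun z : ℝ => (z - c) / h) (1 / h) y := by
    simpa using ((hasDerivAt_id y).sub_const c).div_const h
  have hkey : ∀ (q : Polynomial ℚ) (t : ℝ),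
      Polynomial.aeval t q = ((q.map (algebraMap ℚ ℝ)).eval t) := by
    intro q t; rw [Polynomial.eval_map, Polynomial.aeval_def]
  have hP := ((Polynomial.hasDerivAt ((Polynomial.bernoulli (k+1)).map (algebraMap ℚ ℝ))
      ((y - c) / h)).comp y hg).const_mul (h ^ (k+1) / (Nat.factorial (k+1) : ℝ))
  have hval : h ^ k / (Nat.factorial k : ℝ) *
        Polynomial.aeval ((y - c) / h) (Polynomial.bernoulli k)
      = h ^ (k+1) / (Nat.factorial (k+1) : ℝ) *
        ((((Polynomial.bernoulli (k+1)).map (algebraMap ℚ ℝ)).derivative).eval ((y - c)/h)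
          * (1 / h)) := by
    rw [Polynomial.derivative_map, Polynomial.derivative_bernoulli_add_one,
      Polynomial.map_mul, Polynomial.eval_mul, ← hkey, ← hkey]
    have h1 : (Polynomial.aeval ((y - c)/h)) ((k : Polynomial ℚ) + 1) = (k + 1 : ℝ) := by
      simp
    rw [h1]
    have hk0 : (Nat.factorial k : ℝ) ≠ 0 := Nat.cast_ne_zero.2 (Nat.factorial_ne_zero k)
    rw [Nat.factorial_succ]
    push_cast
    field_simp
    ring
  rw [hval]
  simpa only [Function.comp_def, hkey] using hP

lemma euler_maclaurin_aux (a b : ℝ) (hab : a < b) (p n : ℕ) (hp : 1 ≤ p) (hn : 1 ≤ n)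
    (f : ℕ → ℝ → ℝ)
    (hcont : ∀ k < p, ContinuousOn (f k) (Icc a b))
    (hD : ∀ k < p, ∀ y ∈ Ioo a b, HasDerivAt (f k) (f (k+1) y) y)
    (hint : IntervalIntegrable (f p) volume a b)
    (hvanish : ∀ i < p, f i a = 0 ∧ f i b = 0) :
    |((b-a)/n) * ∑ j ∈ Finset.Ico 1 n, f 0 (a + j * ((b-a)/n)) - ∫ x in a..b, f 0 x| ≤
      ((1 / (Nat.factorial p : ℝ)) *
        (⨆ z : Set.Icc (0 : ℝ) 1, |Polynomial.aeval (z : ℝ) (Polynomial.bernoulli p)|) *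
        ∫ x in a..b, |f p x|) * ((b-a)/n) ^ p := by
  set h : ℝ := (b - a) / n with hhdef
  set M : ℝ := ⨆ z : Set.Icc (0 : ℝ) 1, |Polynomial.aeval (z : ℝ) (Polynomial.bernoulli p)|
    with hMdef
  have hnpos : (0:ℝ) < n := by exact_mod_cast hn
  have hhpos : 0 < h := div_pos (sub_pos.2 hab) hnpos
  have hh0 : h ≠ 0 := ne_of_gt hhpos
  set X : ℕ → ℝ := fun j => a + j * h with hXdef
  have hx0 : X 0 = a := by simp [hXdef]
  have hxn : X n = b := by
    simp only [hXdef, hhdef]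
    field_simp
    ring
  have hxlt : ∀ j : ℕ, X j < X (j+1) := by
    intro j
    simp only [hXdef]
    push_cast
    nlinarith [hhpos]
  have hxmono : StrictMono X := strictMono_nat_of_lt_succ hxlt
  have hxdiff : ∀ j : ℕ, X (j+1) - X j = h := by
    intro j; simp only [hXdef]; push_cast; ring
  have hmem : ∀ j ≤ n, X j ∈ Icc a b := by
    intro j hj
    constructor
    · rw [← hx0]; exact hxmono.monotone (Nat.zero_le j)
    · rw [← hxn]; exact hxmono.monotone hj
  have hsub : ∀ j < n, Icc (X j) (X (j+1)) ⊆ Icc a b := by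
    intro j hj
    exact Icc_subset_Icc (hmem j (by omega)).1 (hmem (j+1) (by omega)).2
  have hsubo : ∀ j < n, Ioo (X j) (X (j+1)) ⊆ Ioo a b := by
    intro j hj
    exact Ioo_subset_Ioo (hmem j (by omega)).1 (hmem (j+1) (by omega)).2
  set u : ℕ → ℕ → ℝ → ℝ := fun k j y =>
    h ^ k / (Nat.factorial k : ℝ) * Polynomial.aeval ((y - X j) / h) (Polynomial.bernoulli k)
    with hudef
  have hucont : ∀ k j, Continuous (u k j) := by
    intro k j
    apply Continuous.mul continuous_const
    exact (Polynomial.continuous_aeval (Polynomial.bernoulli k)).comp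
      (((continuous_id.sub continuous_const)).div_const h)
  have huD : ∀ k j y, HasDerivAt (u (k+1) j) (u k j y) y := by
    intro k j y
    exact bern_hasDerivAt k (X j) h hh0 y
  have hfInt : ∀ k ≤ p, ∀ j < n, IntervalIntegrable (f k) volume (X j) (X (j+1)) := by
    intro k hk j hj
    rcases eq_or_lt_of_le hk with rfl | hk'
    · apply hint.mono_set
      rw [uIcc_of_le (hxlt j).le, uIcc_of_le hab.le]
      exact hsub j hj
    · apply ContinuousOn.intervalIntegrable
      rw [uIcc_of_le (hxlt j).le]
      exact (hcont k hk').mono (hsub j hj)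
  have hprodInt : ∀ k ≤ p, ∀ j < n,
      IntervalIntegrable (fun y => u k j y * f k y) volume (X j) (X (j+1)) := by
    intro k hk j hj
    exact (hfInt k hk j hj).continuousOn_mul (hucont k j).continuousOn
  have hIBP : ∀ k < p, ∀ j < n,
      (∫ y in X j..X (j+1), u k j y * f k y) + (∫ y in X j..X (j+1), u (k+1) j y * f (k+1) y)
        = u (k+1) j (X (j+1)) * f k (X (j+1)) - u (k+1) j (X j) * f k (X j) := by
    intro k hk j hj
    rw [← intervalIntegral.integral_add (hprodInt k (by omega) j hj)
        (hprodInt (k+1) (by omega) j hj)]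
    apply intervalIntegral.integral_eq_sub_of_hasDerivAt_of_le
      (f := fun y => u (k+1) j y * f k y)
      (f' := fun y => u k j y * f k y + u (k+1) j y * f (k+1) y) (hxlt j).le
    · exact ((hucont (k+1) j).continuousOn).mul ((hcont k hk).mono (hsub j hj))
    · intro y hy
      exact (huD k j y).mul (hD k hk y (hsubo j hj hy))
    · exact (hprodInt k (by omega) j hj).add (hprodInt (k+1) (by omega) j hj)
  -- endpoint values of u
  have hxq0 : ∀ j : ℕ, (X j - X j) / h = 0 := by intro j; simp
  have hxq1 : ∀ j : ℕ, (X (j+1) - X j) / h = 1 := by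
    intro j; rw [hxdiff j]; exact div_self hh0
  have huval0 : ∀ k j, u k j (X j)
      = h ^ k / (Nat.factorial k : ℝ) * algebraMap ℚ ℝ ((Polynomial.bernoulli k).eval 0) := by
    intro k j
    rw [hudef]
    simp only [hxq0]
    rw [Polynomial.aeval_def, Polynomial.eval₂_at_zero, Polynomial.coeff_zero_eq_eval_zero]
  have huval1 : ∀ k j, u k j (X (j+1))
      = h ^ k / (Nat.factorial k : ℝ) * algebraMap ℚ ℝ ((Polynomial.bernoulli k).eval 1) := by
    intro k j
    rw [hudef]
    simp only [hxq1]
    rw [Polynomial.aeval_def, Polynomial.eval₂_at_one]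
  set S : ℕ → ℝ := fun k => ∑ j ∈ Finset.range n, ∫ y in X j..X (j+1), u k j y * f k y
    with hSdef
  have hu0 : ∀ j y, u 0 j y = 1 := by
    intro j y; simp [hudef, Polynomial.bernoulli_zero]
  have hS0 : S 0 = ∫ y in a..b, f 0 y := by
    simp only [hSdef, hu0, one_mul]
    rw [← hx0, ← hxn]
    exact intervalIntegral.sum_integral_adjacent_intervals fun j hj => hfInt 0 (by omega) j hj
  have hstep0 : h * (∑ j ∈ Finset.Ico 1 n, f 0 (X j)) - (∫ y in a..b, f 0 y) = S 1 := by
    have hsum : S 0 + S 1 = ∑ j ∈ Finset.range n,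
        (u 1 j (X (j+1)) * f 0 (X (j+1)) - u 1 j (X j) * f 0 (X j)) := by
      simp only [hSdef]
      rw [← Finset.sum_add_distrib]
      exact Finset.sum_congr rfl fun j hj => hIBP 0 hp j (Finset.mem_range.1 hj)
    have hv1 : ∀ j, u 1 j (X (j+1)) = h / 2 := by
      intro j
      rw [huval1, Polynomial.bernoulli_eval_one, bernoulli'_one, eq_ratCast]
      norm_num [Nat.factorial]
      ring
    have hv0 : ∀ j, u 1 j (X j) = -(h / 2) := by
      intro j
      rw [huval0, Polynomial.bernoulli_eval_zero, bernoulli_one, eq_ratCast]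
      norm_num [Nat.factorial]
      ring
    have hsum2 : S 0 + S 1 = (h/2) * (∑ j ∈ Finset.range n, f 0 (X (j+1)))
        + (h/2) * (∑ j ∈ Finset.range n, f 0 (X j)) := by
      rw [hsum, Finset.mul_sum, Finset.mul_sum, ← Finset.sum_add_distrib]
      refine Finset.sum_congr rfl fun j hj => ?_
      rw [hv1 j, hv0 j]; ring
    have hA : ∑ j ∈ Finset.range n, f 0 (X (j+1)) = ∑ j ∈ Finset.Ico 1 n, f 0 (X j) := by
      have e1 : ∑ j ∈ Finset.Ico 1 (n+1), f 0 (X j)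
          = ∑ j ∈ Finset.range n, f 0 (X (j+1)) := by
        rw [Finset.sum_Ico_eq_sum_range]
        simp [Nat.add_comm]
      have e2 : ∑ j ∈ Finset.Ico 1 (n+1), f 0 (X j)
          = (∑ j ∈ Finset.Ico 1 n, f 0 (X j)) + f 0 (X n) :=
        Finset.sum_Ico_succ_top hn _
      rw [hxn, (hvanish 0 hp).2, add_zero] at e2
      rw [← e1, e2]
    have hB : ∑ j ∈ Finset.range n, f 0 (X j) = ∑ j ∈ Finset.Ico 1 n, f 0 (X j) := by
      rw [Finset.range_eq_Ico, Finset.sum_eq_sum_Ico_succ_bot (by omega : 0 < n)]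
      rw [hx0, (hvanish 0 hp).1, zero_add]
    have : S 0 + S 1 = h * ∑ j ∈ Finset.Ico 1 n, f 0 (X j) := by
      rw [hsum2, hA, hB]; ring
    rw [hS0] at this
    linarith
  have hstepk : ∀ k, 1 ≤ k → k < p → S (k+1) = - S k := by
    intro k h1 h2
    have hsum : S k + S (k+1) = ∑ j ∈ Finset.range n,
        (u (k+1) j (X (j+1)) * f k (X (j+1)) - u (k+1) j (X j) * f k (X j)) := by
      simp only [hSdef]
      rw [← Finset.sum_add_distrib]
      exact Finset.sum_congr rfl fun j hj => hIBP k h2 j (Finset.mem_range.1 hj)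
    have hBeq : (Polynomial.bernoulli (k+1)).eval 1 = (Polynomial.bernoulli (k+1)).eval 0 := by
      rw [Polynomial.bernoulli_eval_one, Polynomial.bernoulli_eval_zero,
        bernoulli_eq_bernoulli'_of_ne_one (by omega)]
    set C : ℝ := h ^ (k+1) / (Nat.factorial (k+1) : ℝ)
        * algebraMap ℚ ℝ ((Polynomial.bernoulli (k+1)).eval 0) with hC
    have hsum2 : S k + S (k+1)
        = ∑ j ∈ Finset.range n, (C * f k (X (j+1)) - C * f k (X j)) := by
      rw [hsum]
      refine Finset.sum_congr rfl fun j hj => ?_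
      rw [huval1, huval0, hBeq]
    rw [Finset.sum_range_sub (fun j => C * f k (X j))] at hsum2
    rw [hxn, hx0, (hvanish k h2).1, (hvanish k h2).2] at hsum2
    simp only [mul_zero, sub_zero, sub_self] at hsum2
    linarith
  have hkey : ∀ k, 1 ≤ k → k ≤ p → |S k| = |S 1| := by
    intro k hk1
    induction k, hk1 using Nat.le_induction with
    | base => intro _; rfl
    | succ k hk ih =>
        intro hkp
        rw [hstepk k hk (by omega), abs_neg]
        exact ih (by omega)
  have hMnn : ∀ t ∈ Icc (0:ℝ) 1, |Polynomial.aeval t (Polynomial.bernoulli p)| ≤ M := by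
    intro t ht
    have hcf : Continuous fun z : ℝ => |Polynomial.aeval z (Polynomial.bernoulli p)| :=
      (Polynomial.continuous_aeval _).abs
    have hbdd : BddAbove (Set.range fun z : Set.Icc (0:ℝ) 1 =>
        |Polynomial.aeval (z : ℝ) (Polynomial.bernoulli p)|) := by
      rw [show (fun z : Set.Icc (0:ℝ) 1 => |Polynomial.aeval (z : ℝ) (Polynomial.bernoulli p)|)
          = (fun z : ℝ => |Polynomial.aeval z (Polynomial.bernoulli p)|) ∘ Subtype.val from rfl,
        Set.range_comp, Subtype.range_coe]
      exact (isCompact_Icc.image hcf).bddAbove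
    exact le_ciSup hbdd ⟨t, ht⟩
  have hup_bound : ∀ j < n, ∀ y ∈ Icc (X j) (X (j+1)),
      |u p j y| ≤ h ^ p / (Nat.factorial p : ℝ) * M := by
    intro j hj y hy
    rw [hudef]
    simp only []
    rw [abs_mul, abs_of_nonneg (show (0:ℝ) ≤ h ^ p / (Nat.factorial p : ℝ) by positivity)]
    apply mul_le_mul_of_nonneg_left _ (by positivity)
    apply hMnn
    constructor
    · apply div_nonneg _ hhpos.le
      linarith [hy.1]
    · rw [div_le_one hhpos]
      have h2 := hy.2
      have h3 := hxdiff j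
      linarith
  have habs : ∀ j < n, |∫ y in X j..X (j+1), u p j y * f p y|
      ≤ (h ^ p / (Nat.factorial p : ℝ) * M) * ∫ y in X j..X (j+1), |f p y| := by
    intro j hj
    calc |∫ y in X j..X (j+1), u p j y * f p y|
        ≤ ∫ y in X j..X (j+1), |u p j y * f p y| :=
          intervalIntegral.abs_integral_le_integral_abs (hxlt j).le
      _ ≤ ∫ y in X j..X (j+1), (h ^ p / (Nat.factorial p : ℝ) * M) * |f p y| := by
          apply intervalIntegral.integral_mono_on (hxlt j).le
          · exact (hprodInt p le_rfl j hj).abs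
          · exact ((hfInt p le_rfl j hj).abs).const_mul _
          · intro y hy
            rw [abs_mul]
            exact mul_le_mul_of_nonneg_right (hup_bound j hj y hy) (abs_nonneg _)
      _ = (h ^ p / (Nat.factorial p : ℝ) * M) * ∫ y in X j..X (j+1), |f p y| :=
          intervalIntegral.integral_const_mul _ _
  have hsplit : ∑ j ∈ Finset.range n, (∫ y in X j..X (j+1), |f p y|)
      = ∫ y in a..b, |f p y| := by
    rw [← hx0, ← hxn]
    exact intervalIntegral.sum_integral_adjacent_intervals fun j hj => (hfInt p le_rfl j hj).abs
  have hfinal : |S p| ≤ (h ^ p / (Nat.factorial p : ℝ) * M) * ∫ y in a..b, |f p y| := by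
    calc |S p| ≤ ∑ j ∈ Finset.range n, |∫ y in X j..X (j+1), u p j y * f p y| :=
        Finset.abs_sum_le_sum_abs _ _
      _ ≤ ∑ j ∈ Finset.range n,
          (h ^ p / (Nat.factorial p : ℝ) * M) * ∫ y in X j..X (j+1), |f p y| :=
        Finset.sum_le_sum fun j hj => habs j (Finset.mem_range.1 hj)
      _ = (h ^ p / (Nat.factorial p : ℝ) * M)
          * ∑ j ∈ Finset.range n, ∫ y in X j..X (j+1), |f p y| := by
        rw [Finset.mul_sum]
      _ = _ := by rw [hsplit]
  have e : ∀ j : ℕ, a + (j:ℝ) * h = X j := fun j => by rw [hXdef]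
  calc |h * ∑ j ∈ Finset.Ico 1 n, f 0 (a + ↑j * h) - ∫ x in a..b, f 0 x|
      = |S p| := by
        simp only [e]
        rw [hstep0]
        exact (hkey p hp le_rfl).symm
    _ ≤ (h ^ p / (Nat.factorial p : ℝ) * M) * ∫ y in a..b, |f p y| := hfinal
    _ = ((1 / (Nat.factorial p : ℝ)) * M * ∫ x in a..b, |f p x|) * h ^ p := by ring

/-- Corollary of the Euler–Maclaurin formula: if w ∈ C^{p-1}[a,b], w^{(p)} is
absolutely integrable on [a,b], and w^{(i)}(a)=w^{(i)}(b)=0 for i=0,…,p−1, then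
the trapezoidal sum with step h=(b−a)/n satisfies
|h·Σ_{j=1}^{n−1} w(a+jh) − ∫_a^b w| ≤ C_p·h^p with
C_p = (1/p!)·(max_{0≤z≤1}|B_p(z)|)·∫_a^b |w^{(p)}|. -/
theorem euler_maclaurin_vanishing_endpoints
    (a b : ℝ) (hab : a < b) (p n : ℕ) (hp : 1 ≤ p) (hn : 1 ≤ n)
    (w : ℝ → ℝ)
    (hw : ContDiffOn ℝ (p - 1) w (Icc a b))
    (hderiv : ∀ x ∈ Ioo a b,
      HasDerivAt (iteratedDerivWithin (p - 1) w (Icc a b))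
        (iteratedDerivWithin p w (Icc a b) x) x)
    (hint : IntervalIntegrable (iteratedDerivWithin p w (Icc a b)) volume a b)
    (hvanish : ∀ i < p,
      iteratedDerivWithin i w (Icc a b) a = 0 ∧ iteratedDerivWithin i w (Icc a b) b = 0) :
    let h := (b - a) / n
    |h * ∑ j ∈ Finset.Ico 1 n, w (a + j * h) - ∫ x in a..b, w x| ≤
      ((1 / (Nat.factorial p : ℝ)) *
        (⨆ z : Icc (0 : ℝ) 1, |Polynomial.aeval (z : ℝ) (Polynomial.bernoulli p)|) *
        ∫ x in a..b, |iteratedDerivWithin p w (Icc a b) x|) * h ^ p := by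


  intro h
  have huniq : UniqueDiffOn ℝ (Icc a b) := uniqueDiffOn_Icc hab
  have hcast : ((p : WithTop ℕ∞) - 1) = ((p - 1 : ℕ) : WithTop ℕ∞) := by
    norm_cast
  rw [hcast] at hw
  have hcont : ∀ k < p, ContinuousOn (iteratedDerivWithin k w (Icc a b)) (Icc a b) := by
    intro k hk
    exact hw.continuousOn_iteratedDerivWithin (by exact_mod_cast (by omega : k ≤ p - 1)) huniq
  have hD : ∀ k < p, ∀ y ∈ Ioo a b,
      HasDerivAt (iteratedDerivWithin k w (Icc a b))
        (iteratedDerivWithin (k+1) w (Icc a b) y) y := by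
    intro k hk y hy
    by_cases hkp : k + 1 = p
    · subst hkp
      simpa using hderiv y hy
    · have hk' : k < p - 1 := by omega
      have hdiff := hw.differentiableOn_iteratedDerivWithin (m := k)
        (by exact_mod_cast hk') huniq
      have h2 := (hdiff y (Ioo_subset_Icc_self hy)).hasDerivWithinAt
      rw [← iteratedDerivWithin_succ] at h2
      exact h2.hasDerivAt (Icc_mem_nhds hy.1 hy.2)
  have key := euler_maclaurin_aux a b hab p n hp hn
    (fun k => iteratedDerivWithin k w (Icc a b)) hcont hD hint hvanish
  simpa only [iteratedDerivWithin_zero] using key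
end

section
/- Let f(x) = (x−a)^c u_a(x) near x=a with −1<c<0, u_a continuous with u_a(a)≠0, and let ψ be a change of variable with ψ(α)=a, ψ'(ξ)>0 on (α,β), ψ ∈ C^{r+1} near α, ψ^{(i)}(α)=0 for i=1,…,r and ψ^{(r+1)}(α)≠0. Then F(ξ)=f(ψ(ξ))ψ'(ξ) satisfies F(ξ) ~ M·(ξ−α)^ρ as ξ→α⁺ for some constant M≠0, where ρ = c(r+1)+r. -/
open Filter Real Set

lemma contDiffAt_deriv_of_succ {n : ℕ} {h : ℝ → ℝ} {α : ℝ}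
    (hC : ContDiffAt ℝ (n + 1) h α) : ContDiffAt ℝ n (deriv h) α := by
  have h1 : ContDiffAt ℝ n (fderiv ℝ h) α :=
    hC.fderiv_right (by norm_cast)
  have h2 : ContDiffAt ℝ n (fun x => fderiv ℝ h x 1) α :=
    h1.clm_apply contDiffAt_const
  exact h2.congr_of_eventuallyEq (Eventually.of_forall fun x => (fderiv_apply_one_eq_deriv).symm)

lemma taylor_limit : ∀ (n : ℕ) (h : ℝ → ℝ) (α : ℝ),
    ContDiffAt ℝ n h α → (∀ i, i < n → iteratedDeriv i h α = 0) →
    Tendsto (fun ξ => h ξ / (ξ - α) ^ n) (nhdsWithin α (Set.Ioi α))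
      (nhds (iteratedDeriv n h α / (Nat.factorial n))) := by
  intro n
  induction n with
  | zero =>
      intro h α hC _
      simpa using (hC.continuousAt.tendsto.mono_left nhdsWithin_le_nhds)
  | succ n ih =>
      intro h α hC hz
      have hα0 : h α = 0 := by simpa using hz 0 (Nat.succ_pos n)
      have hconst : ContDiffAt ℝ n (deriv h) α := contDiffAt_deriv_of_succ hC
      have hderiv_lim :
          Tendsto (fun ξ => deriv h ξ / (ξ - α) ^ n) (nhdsWithin α (Set.Ioi α))
            (nhds (iteratedDeriv (n+1) h α / ((Nat.factorial n)))) := by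
        have := ih (deriv h) α hconst (fun i hi => by
          rw [← iteratedDeriv_succ']
          exact hz (i+1) (Nat.succ_lt_succ hi))
        rwa [← iteratedDeriv_succ'] at this
      have hgderiv : ∀ x : ℝ, deriv (fun y => (y - α) ^ (n+1)) x = (n+1) * (x - α) ^ n := by
        intro x
        have : HasDerivAt (fun y : ℝ => (y - α) ^ (n+1))
            ((n+1 : ℕ) * (x - α) ^ n * 1) x :=
          ((hasDerivAt_id x).sub_const α).pow (n+1)
        simpa using this.deriv
      apply deriv.lhopital_zero_nhdsGT
      · have hev := hC.eventually (by simp)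
        filter_upwards [nhdsWithin_le_nhds hev] with x hx
        exact hx.differentiableAt (by simp)
      · filter_upwards [self_mem_nhdsWithin] with x (hx : x ∈ Set.Ioi α)
        have hx' : 0 < x - α := sub_pos.mpr hx
        rw [hgderiv x]
        positivity
      · have := hC.continuousAt.tendsto.mono_left (nhdsWithin_le_nhds (a := α) (s := Set.Ioi α))
        rwa [hα0] at this
      · have : Tendsto (fun ξ : ℝ => (ξ - α) ^ (n+1)) (nhds α) (nhds ((α - α) ^ (n+1))) :=
          ((continuous_id.sub continuous_const).pow _).tendsto α
        simpa using this.mono_left nhdsWithin_le_nhds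
      · have key : Tendsto (fun x => (deriv h x / (x - α) ^ n) / (n+1 : ℝ))
            (nhdsWithin α (Set.Ioi α)) (nhds (iteratedDeriv (n+1) h α / ((Nat.factorial n)) / (n+1 : ℝ))) :=
          hderiv_lim.div_const _
        have heq : iteratedDeriv (n+1) h α / ((Nat.factorial n)) / (n+1 : ℝ)
            = iteratedDeriv (n+1) h α / ((Nat.factorial (n+1))) := by
          rw [Nat.factorial_succ, div_div]
          congr 1
          push_cast
          ring
        rw [heq] at key
        refine key.congr (fun x => ?_)
        rw [hgderiv x, div_div, mul_comm]

/-- If f(x) = (x−a)^c·u_a(x) near a with −1<c<0, u_a(a)≠0, and ψ has a zero of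
order r+1 at α (ψ^{(i)}(α)=0 for 1≤i≤r, ψ^{(r+1)}(α)≠0), then the transformed
integrand F(ξ)=f(ψ(ξ))ψ'(ξ) satisfies F(ξ) ~ M·(ξ−α)^ρ as ξ→α⁺ with M≠0 and
ρ = c(r+1)+r. -/
theorem transformed_integrand_endpoint_asymptotics
    (a b α β c : ℝ) (r : ℕ) (f u ψ : ℝ → ℝ)
    (hab : a < b) (hαβ : α < β)
    (hc1 : -1 < c) (hc0 : c < 0)
    (hf : ∀ x ∈ Ioo a b, f x = (x - a) ^ c * u x)
    (hu : ContinuousAt u a) (hua : u a ≠ 0)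
    (hψ : ContDiffAt ℝ (r + 1) ψ α)
    (hψα : ψ α = a)
    (hψmap : ∀ ξ ∈ Ioo α β, ψ ξ ∈ Ioo a b)
    (hψ' : ∀ ξ ∈ Ioo α β, 0 < deriv ψ ξ)
    (hvanish : ∀ i, 1 ≤ i → i ≤ r → iteratedDeriv i ψ α = 0)
    (hnonzero : iteratedDeriv (r + 1) ψ α ≠ 0) :
    ∃ M : ℝ, M ≠ 0 ∧
      Tendsto (fun ξ : ℝ => (f (ψ ξ) * deriv ψ ξ) / (ξ - α) ^ (c * (r + 1) + r))
        (nhdsWithin α (Set.Ioi α)) (nhds M) := by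
  have hψ' : ContDiffAt ℝ (↑(r + 1)) ψ α := by exact_mod_cast hψ
  set D := iteratedDeriv (r + 1) ψ α with hD
  set g : ℝ → ℝ := fun ξ => ψ ξ - a with hgdef
  -- iterated derivatives of g
  have hg_id : ∀ i, 1 ≤ i → iteratedDeriv i g = iteratedDeriv i ψ := by
    intro i hi
    obtain ⟨j, rfl⟩ := Nat.exists_eq_add_of_le hi
    rw [add_comm 1 j, iteratedDeriv_succ', iteratedDeriv_succ']
    have hdg : deriv g = deriv ψ := by
      funext x
      simp [hgdef, deriv_sub_const]
    rw [hdg]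
  have hgC : ContDiffAt ℝ (↑(r + 1)) g α := hψ'.sub contDiffAt_const
  have hgz : ∀ i, i < r + 1 → iteratedDeriv i g α = 0 := by
    intro i hi
    rcases Nat.eq_zero_or_pos i with h0 | h1
    · subst h0; simp [hgdef, hψα]
    · rw [hg_id i h1]
      exact hvanish i h1 (Nat.lt_succ_iff.mp hi)
  have L1 : Tendsto (fun ξ => (ψ ξ - a) / (ξ - α) ^ (r + 1))
      (nhdsWithin α (Set.Ioi α)) (nhds (D / (Nat.factorial (r + 1)))) := by
    have := taylor_limit (r + 1) g α hgC hgz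
    rwa [hg_id (r + 1) (Nat.succ_le_succ r.zero_le)] at this
  have hdC : ContDiffAt ℝ (↑r) (deriv ψ) α := contDiffAt_deriv_of_succ hψ'
  have L2 : Tendsto (fun ξ => deriv ψ ξ / (ξ - α) ^ r)
      (nhdsWithin α (Set.Ioi α)) (nhds (D / (Nat.factorial r))) := by
    have := taylor_limit r (deriv ψ) α hdC (fun i hi => by
      rw [← iteratedDeriv_succ']
      exact hvanish (i + 1) (Nat.succ_le_succ i.zero_le) hi)
    rwa [← iteratedDeriv_succ'] at this
  -- eventual membership
  have hmem : ∀ᶠ ξ in nhdsWithin α (Set.Ioi α), ξ ∈ Ioo α β :=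
    Ioo_mem_nhdsGT_of_mem (left_mem_Ico.mpr hαβ)
  set K : ℝ := D / (Nat.factorial (r + 1)) with hK
  have hK0 : K ≠ 0 := div_ne_zero hnonzero (by positivity)
  have hKpos : 0 < K := by
    have hge : 0 ≤ K := by
      refine ge_of_tendsto L1 ?_
      filter_upwards [hmem, self_mem_nhdsWithin] with ξ hξ hξ'
      have h1 : 0 < ψ ξ - a := sub_pos.mpr (hψmap ξ hξ).1
      have h2 : 0 < ξ - α := sub_pos.mpr hξ'
      positivity
    exact lt_of_le_of_ne hge (Ne.symm hK0)
  have Tψ : Tendsto ψ (nhdsWithin α (Set.Ioi α)) (nhds a) := by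
    have := hψ'.continuousAt.tendsto.mono_left
      (nhdsWithin_le_nhds (a := α) (s := Set.Ioi α))
    rwa [hψα] at this
  have Tu : Tendsto (fun ξ => u (ψ ξ)) (nhdsWithin α (Set.Ioi α)) (nhds (u a)) :=
    hu.tendsto.comp Tψ
  have Trpow : Tendsto (fun ξ => ((ψ ξ - a) / (ξ - α) ^ (r + 1)) ^ c)
      (nhdsWithin α (Set.Ioi α)) (nhds (K ^ c)) :=
    (Real.continuousAt_rpow_const K c (Or.inl hK0)).tendsto.comp L1
  refine ⟨K ^ c * u a * (D / (Nat.factorial r)), ?_, ?_⟩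
  · have h1 : (0:ℝ) < K ^ c := Real.rpow_pos_of_pos hKpos c
    have h2 : D / (Nat.factorial r) ≠ 0 := div_ne_zero hnonzero (by positivity)
    exact mul_ne_zero (mul_ne_zero h1.ne' hua) h2
  · refine Tendsto.congr' ?_ ((Trpow.mul Tu).mul L2)
    filter_upwards [hmem, self_mem_nhdsWithin] with ξ hξ hξ'
    have ht : 0 < ξ - α := sub_pos.mpr hξ'
    have hs : 0 < ψ ξ - a := sub_pos.mpr (hψmap ξ hξ).1
    have hfψ : f (ψ ξ) = (ψ ξ - a) ^ c * u (ψ ξ) := hf (ψ ξ) (hψmap ξ hξ)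
    set t := ξ - α
    set s := ψ ξ - a
    have e1 : (s / t ^ (r + 1)) ^ c = s ^ c / (t ^ (r + 1)) ^ c :=
      Real.div_rpow hs.le (by positivity) c
    have e2 : ((t ^ (r + 1) : ℝ)) ^ c = t ^ ((↑(r + 1) : ℝ) * c) := by
      rw [← Real.rpow_natCast t (r + 1), ← Real.rpow_mul ht.le]
    have e3 : t ^ (c * (↑r + 1) + ↑r) = t ^ ((↑(r + 1) : ℝ) * c) * t ^ r := by
      rw [Real.rpow_add ht, Real.rpow_natCast]
      congr 2
      push_cast
      ring
    have hA : (0:ℝ) < t ^ ((↑(r + 1) : ℝ) * c) := Real.rpow_pos_of_pos ht _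
    rw [e1, e2, e3, hfψ]
    field_simp
end

section
/- Let 0<t<1 and k ≥ 0. The Cauchy principal value ⨍₀¹ √(x(1−x))·U_k(2x−1)/(x−t) dx equals −(π/2)·T_{k+1}(2t−1), where T_n and U_n are the Chebyshev polynomials of the first and second kinds. -/
open Filter Real intervalIntegral Set Polynomial

namespace CPVaux

lemma sqrt_one_sub_sq (x : ℝ) :
    Real.sqrt (1 - (2 * x - 1) ^ 2) = 2 * Real.sqrt (x * (1 - x)) := by
  rw [show (1 - (2 * x - 1) ^ 2) = 2 ^ 2 * (x * (1 - x)) by ring,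
    Real.sqrt_mul (by positivity), Real.sqrt_sq (by norm_num)]

lemma hasDerivAt_theta {x : ℝ} (h0 : 0 < x) (h1 : x < 1) :
    HasDerivAt (fun y : ℝ => Real.arccos (2 * y - 1))
      (-(1 / Real.sqrt (x * (1 - x)))) x := by
  have hx1 : (2 : ℝ) * x - 1 ≠ -1 := by intro h; nlinarith
  have hx2 : (2 : ℝ) * x - 1 ≠ 1 := by intro h; nlinarith
  have h := (Real.hasDerivAt_arccos hx1 hx2).comp x
    (((hasDerivAt_id x).const_mul 2).sub_const 1)
  refine h.congr_deriv ?_; symm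
  rw [sqrt_one_sub_sq]
  have hw : Real.sqrt (x * (1 - x)) ≠ 0 := (Real.sqrt_pos.2 (by nlinarith)).ne'
  field_simp

lemma hasDerivAt_w {x : ℝ} (h0 : 0 < x) (h1 : x < 1) :
    HasDerivAt (fun y : ℝ => Real.sqrt (y * (1 - y)))
      ((1 - 2 * x) / (2 * Real.sqrt (x * (1 - x)))) x := by
  have hne : x * (1 - x) ≠ 0 := by nlinarith
  have h := (Real.hasDerivAt_sqrt hne).comp x
    (((hasDerivAt_id x).mul ((hasDerivAt_const x 1).sub (hasDerivAt_id x))))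
  refine h.congr_deriv ?_; symm
  simp only [Pi.sub_apply, id_eq]
  field_simp
  ring

lemma sin_theta (x : ℝ) :
    Real.sin (Real.arccos (2 * x - 1)) = 2 * Real.sqrt (x * (1 - x)) := by
  rw [Real.sin_arccos, sqrt_one_sub_sq]

lemma cos_theta {x : ℝ} (h0 : 0 ≤ x) (h1 : x ≤ 1) :
    Real.cos (Real.arccos (2 * x - 1)) = 2 * x - 1 :=
  Real.cos_arccos (by linarith) (by linarith)

lemma continuous_w : Continuous (fun x : ℝ => Real.sqrt (x * (1 - x))) :=
  Real.continuous_sqrt.comp (by continuity)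

lemma integral_w : ∫ x in (0:ℝ)..1, Real.sqrt (x * (1 - x)) = π / 8 := by
  have key : ∀ x ∈ Ioo (0:ℝ) 1, HasDerivAt
      (fun y : ℝ => (Real.sin (2 * Real.arccos (2 * y - 1)) / 2
        - Real.arccos (2 * y - 1)) / 8)
      (Real.sqrt (x * (1 - x))) x := by
    intro x hx
    obtain ⟨h0, h1⟩ := hx
    have hθ := hasDerivAt_theta h0 h1
    have h := ((((Real.hasDerivAt_sin _).comp x (hθ.const_mul 2)).div_const 2).sub hθ).div_const 8
    refine h.congr_deriv ?_; symm
    have hw : Real.sqrt (x * (1 - x)) ≠ 0 := (Real.sqrt_pos.2 (by nlinarith)).ne'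
    have hw2 : Real.sqrt (x * (1 - x)) ^ 2 = x * (1 - x) := Real.sq_sqrt (by nlinarith)
    rw [Real.cos_two_mul, cos_theta h0.le h1.le]
    set w := Real.sqrt (x * (1 - x)) with hwdef
    field_simp
    linear_combination (8 : ℝ) * hw2
  rw [integral_eq_sub_of_hasDerivAt_of_le (by norm_num)
    (by apply Continuous.continuousOn; continuity) key
    (continuous_w.intervalIntegrable 0 1)]
  have e1 : (2:ℝ) * 1 - 1 = 1 := by norm_num
  have e0 : (2:ℝ) * 0 - 1 = -1 := by norm_num
  rw [e1, e0, Real.arccos_one, Real.arccos_neg_one]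
  norm_num [Real.sin_two_pi]
  ring

lemma integral_w_U (k : ℕ) (hk : 1 ≤ k) :
    ∫ x in (0:ℝ)..1, Real.sqrt (x * (1 - x)) * (Chebyshev.U ℝ k).eval (2 * x - 1) = 0 := by
  have hk0 : (k:ℝ) ≠ 0 := Nat.cast_ne_zero.2 (by omega)
  have hk2 : (k:ℝ) + 2 ≠ 0 := by positivity
  have key : ∀ x ∈ Ioo (0:ℝ) 1, HasDerivAt
      (fun y : ℝ => (Real.sin (((k:ℝ)+2) * Real.arccos (2*y-1)) / ((k:ℝ)+2)
        - Real.sin ((k:ℝ) * Real.arccos (2*y-1)) / (k:ℝ)) / 8)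
      (Real.sqrt (x * (1 - x)) * (Chebyshev.U ℝ k).eval (2 * x - 1)) x := by
    intro x hx; obtain ⟨h0, h1⟩ := hx
    have hθ := hasDerivAt_theta h0 h1
    have h := ((((Real.hasDerivAt_sin _).comp x (hθ.const_mul ((k:ℝ)+2))).div_const ((k:ℝ)+2)).sub
      (((Real.hasDerivAt_sin _).comp x (hθ.const_mul (k:ℝ))).div_const (k:ℝ))).div_const 8
    refine h.congr_deriv ?_; symm
    have hw : Real.sqrt (x * (1 - x)) ≠ 0 := (Real.sqrt_pos.2 (by nlinarith)).ne'
    have hU := Polynomial.Chebyshev.U_real_cos (Real.arccos (2*x-1)) (k:ℤ)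
    rw [cos_theta h0.le h1.le, sin_theta] at hU
    push_cast at hU
    have hcc : Real.cos ((k:ℝ) * Real.arccos (2*x-1)) - Real.cos (((k:ℝ)+2) * Real.arccos (2*x-1))
        = 2 * Real.sin (((k:ℝ)+1) * Real.arccos (2*x-1)) * Real.sin (Real.arccos (2*x-1)) := by
      rw [Real.cos_sub_cos,
        show ((k:ℝ) * Real.arccos (2*x-1) + ((k:ℝ)+2) * Real.arccos (2*x-1))/2
          = ((k:ℝ)+1) * Real.arccos (2*x-1) by ring,
        show ((k:ℝ) * Real.arccos (2*x-1) - ((k:ℝ)+2) * Real.arccos (2*x-1))/2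
          = -Real.arccos (2*x-1) by ring,
        Real.sin_neg]
      ring
    rw [sin_theta] at hcc
    set w := Real.sqrt (x * (1 - x)) with hwdef
    set θ := Real.arccos (2*x-1) with hθdef
    field_simp
    linear_combination (-1 : ℝ) * hcc + (4*w) * hU
  have hcontθ : Continuous (fun y : ℝ => Real.arccos (2*y-1)) :=
    Real.continuous_arccos.comp (by continuity)
  have hcont : Continuous (fun y : ℝ => (Real.sin (((k:ℝ)+2) * Real.arccos (2*y-1)) / ((k:ℝ)+2)
        - Real.sin ((k:ℝ) * Real.arccos (2*y-1)) / (k:ℝ)) / 8) :=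
    (((Real.continuous_sin.comp (continuous_const.mul hcontθ)).div_const _).sub
      ((Real.continuous_sin.comp (continuous_const.mul hcontθ)).div_const _)).div_const _
  have hcontU : Continuous (fun x : ℝ => Real.sqrt (x * (1 - x)) * (Chebyshev.U ℝ k).eval (2 * x - 1)) :=
    continuous_w.mul ((Chebyshev.U ℝ (k:ℤ)).continuous_aeval.comp (by continuity))
  rw [integral_eq_sub_of_hasDerivAt_of_le (by norm_num)
    hcont.continuousOn key (hcontU.intervalIntegrable 0 1)]
  have e1 : (2:ℝ) * 1 - 1 = 1 := by norm_num
  have e0 : (2:ℝ) * 0 - 1 = -1 := by norm_num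
  rw [e1, e0, Real.arccos_one, Real.arccos_neg_one]
  simp [Real.sin_nat_mul_pi]
  left
  rw [show ((k:ℝ)+2) = ((k+2:ℕ):ℝ) by push_cast; ring]
  exact Real.sin_nat_mul_pi _

noncomputable def Ee (t x : ℝ) : ℝ :=
  1 - (2*x-1)*(2*t-1) + 4*(Real.sqrt (x*(1-x)))*(Real.sqrt (t*(1-t)))

noncomputable def Gg (t x : ℝ) : ℝ :=
  Real.sqrt (x*(1-x)) + ((2*t-1)/2)*Real.arccos (2*x-1)
    - Real.sqrt (t*(1-t))*Real.log (Ee t x) + Real.sqrt (t*(1-t))*Real.log 2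

noncomputable def Ff (t x : ℝ) : ℝ := Gg t x + Real.sqrt (t*(1-t))*Real.log (x-t)

lemma Ee_pos {t : ℝ} (ht0 : 0 < t) (ht1 : t < 1) {x : ℝ} (h0 : 0 ≤ x) (h1 : x ≤ 1) :
    0 < Ee t x := by
  have hw : 0 ≤ Real.sqrt (x*(1-x)) := Real.sqrt_nonneg _
  have hv : 0 ≤ Real.sqrt (t*(1-t)) := Real.sqrt_nonneg _
  have h2 : (2*x-1)*(2*t-1) < 1 := by
    nlinarith [sq_nonneg (2*x-1-(2*t-1)), mul_pos ht0 (sub_pos.2 ht1), mul_nonneg h0 (sub_nonneg.2 h1)]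
  have : 0 ≤ 4*(Real.sqrt (x*(1-x)))*(Real.sqrt (t*(1-t))) := by positivity
  unfold Ee; linarith

lemma Ee_cont (t : ℝ) : Continuous (Ee t) := by
  unfold Ee
  exact (continuous_const.sub ((by continuity : Continuous fun x : ℝ => (2*x-1)*(2*t-1)))).add
    ((continuous_const.mul continuous_w).mul continuous_const)

lemma Gg_contOn {t : ℝ} (ht0 : 0 < t) (ht1 : t < 1) : ContinuousOn (Gg t) (Icc 0 1) := by
  unfold Gg
  refine ContinuousOn.add (ContinuousOn.sub (ContinuousOn.add ?_ ?_) ?_) continuousOn_const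
  · exact continuous_w.continuousOn
  · exact (continuous_const.mul (Real.continuous_arccos.comp (by continuity))).continuousOn
  · exact ContinuousOn.mul continuousOn_const
      (ContinuousOn.log (Ee_cont t).continuousOn
        (fun x hx => (Ee_pos ht0 ht1 hx.1 hx.2).ne'))

lemma Ff_contOn {t : ℝ} (ht0 : 0 < t) (ht1 : t < 1) {a b : ℝ}
    (hsub : Icc a b ⊆ Icc 0 1) (hne : ∀ x ∈ Icc a b, x ≠ t) :
    ContinuousOn (Ff t) (Icc a b) := by
  unfold Ff
  refine ContinuousOn.add ((Gg_contOn ht0 ht1).mono hsub) (ContinuousOn.mul continuousOn_const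
    (ContinuousOn.log (by fun_prop) (fun x hx => sub_ne_zero.2 (hne x hx))))

lemma Ff_one {t : ℝ} (ht0 : 0 < t) (ht1 : t < 1) : Ff t 1 = 0 := by
  unfold Ff Gg Ee
  have h1 : (1:ℝ)*(1-1) = 0 := by ring
  rw [h1, Real.sqrt_zero, show (2*(1:ℝ)-1) = 1 by ring, Real.arccos_one,
    show (1:ℝ) - 1*(2*t-1) + 4*0*(Real.sqrt (t*(1-t))) = 2*(1-t) by ring,
    Real.log_mul two_ne_zero (by linarith : (1:ℝ)-t ≠ 0)]
  ring

lemma Ff_zero {t : ℝ} (ht0 : 0 < t) (ht1 : t < 1) : Ff t 0 = (2*t-1)*π/2 := by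
  unfold Ff Gg Ee
  have h1 : (0:ℝ)*(1-0) = 0 := by ring
  rw [h1, Real.sqrt_zero, show (2*(0:ℝ)-1) = -1 by ring, Real.arccos_neg_one,
    show (1:ℝ) - (-1)*(2*t-1) + 4*0*(Real.sqrt (t*(1-t))) = 2*t by ring,
    Real.log_mul two_ne_zero (by linarith : t ≠ 0), show (0:ℝ) - t = -t by ring,
    Real.log_neg_eq_log]
  ring

lemma Ff_deriv {t : ℝ} (ht0 : 0 < t) (ht1 : t < 1) {x : ℝ}
    (h0 : 0 < x) (h1 : x < 1) (hxt : x ≠ t) :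
    HasDerivAt (Ff t) (Real.sqrt (x*(1-x))/(x-t)) x := by
  have hw : Real.sqrt (x*(1-x)) ≠ 0 := (Real.sqrt_pos.2 (by nlinarith)).ne'
  have hw2 : Real.sqrt (x*(1-x)) ^ 2 = x*(1-x) := Real.sq_sqrt (by nlinarith)
  have hv2 : Real.sqrt (t*(1-t)) ^ 2 = t*(1-t) := Real.sq_sqrt (by nlinarith)
  have hwd := hasDerivAt_w h0 h1
  have hθ := hasDerivAt_theta h0 h1
  have hE' : HasDerivAt (Ee t)
      (-(2*(2*t-1)) + 4*((1 - 2*x)/(2*Real.sqrt (x*(1-x))))*(Real.sqrt (t*(1-t)))) x := by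
    unfold Ee
    exact ((((by simpa using ((hasDerivAt_id x).const_mul 2).sub_const 1 :
        HasDerivAt (fun y : ℝ => 2*y-1) 2 x).mul_const (2*t-1)).const_sub 1).add
      ((hwd.const_mul 4).mul_const _))
  have hE0 : Ee t x ≠ 0 := (Ee_pos ht0 ht1 h0.le h1.le).ne'
  have hlogE := (Real.hasDerivAt_log hE0).comp x hE'
  have hlogxt := (Real.hasDerivAt_log (sub_ne_zero.2 hxt)).comp x ((hasDerivAt_id x).sub_const t)
  have hF : HasDerivAt (Ff t) _ x :=
    ((hwd.add (hθ.const_mul ((2*t-1)/2))).sub (hlogE.const_mul _)).add_const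
      (Real.sqrt (t*(1-t)) * Real.log 2) |>.add (hlogxt.const_mul _)
  convert hF using 1
  set w := Real.sqrt (x*(1-x)) with hwdef
  set v := Real.sqrt (t*(1-t)) with hvdef
  unfold Ee
  rw [← hwdef, ← hvdef]
  have hxt' : x - t ≠ 0 := sub_ne_zero.2 hxt
  have hE0' : 1 - (2*x-1)*(2*t-1) + 4*w*v ≠ 0 := by unfold Ee at hE0; rw [← hwdef, ← hvdef] at hE0; exact hE0
  have hE0'' : 1 - (t*2-1)*(x*2-1) + w*v*4 ≠ 0 := by intro h; apply hE0'; linear_combination h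
  field_simp
  linear_combination (2*(1-(2*t-1)*(2*x-1)) + 8*w*v - 8*v^2 : ℝ) * hw2 + (-8*x*(1-x) + 4*(x-t)*(1-2*x) : ℝ) * hv2

lemma intervalIntegrable_w_div {t a b : ℝ} (hne : ∀ x ∈ uIcc a b, x - t ≠ 0) :
    IntervalIntegrable (fun x => Real.sqrt (x*(1-x)) / (x-t)) MeasureTheory.volume a b :=
  (ContinuousOn.div continuous_w.continuousOn (by fun_prop) hne).intervalIntegrable

lemma pv0 {t : ℝ} (ht0 : 0 < t) (ht1 : t < 1) :
    Tendsto (fun ε : ℝ =>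
      (∫ x in (0:ℝ)..(t-ε), Real.sqrt (x*(1-x)) / (x-t)) +
       ∫ x in (t+ε)..(1:ℝ), Real.sqrt (x*(1-x)) / (x-t))
      (nhdsWithin 0 (Set.Ioi 0)) (nhds (-(π/2)*(2*t-1))) := by
  have hGc : ContinuousAt (Gg t) t := (Gg_contOn ht0 ht1).continuousAt (Icc_mem_nhds ht0 ht1)
  have h1 : Tendsto (fun ε : ℝ => t - ε) (nhdsWithin 0 (Set.Ioi 0)) (nhds t) := by
    have : Tendsto (fun ε : ℝ => t - ε) (nhds 0) (nhds (t - 0)) :=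
      tendsto_const_nhds.sub tendsto_id
    simpa using this.mono_left nhdsWithin_le_nhds
  have h2 : Tendsto (fun ε : ℝ => t + ε) (nhdsWithin 0 (Set.Ioi 0)) (nhds t) := by
    have : Tendsto (fun ε : ℝ => t + ε) (nhds 0) (nhds (t + 0)) :=
      tendsto_const_nhds.add tendsto_id
    simpa using this.mono_left nhdsWithin_le_nhds
  have hlim : Tendsto (fun ε : ℝ => -(π/2)*(2*t-1) + (Gg t (t-ε) - Gg t (t+ε)))
      (nhdsWithin 0 (Set.Ioi 0)) (nhds (-(π/2)*(2*t-1))) := by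
    have h3 := (hGc.tendsto.comp h1).sub (hGc.tendsto.comp h2)
    simpa using tendsto_const_nhds.add h3
  have hmin : (0:ℝ) < min t (1-t) := lt_min ht0 (by linarith)
  apply hlim.congr'
  filter_upwards [Ioo_mem_nhdsGT_of_mem ⟨le_refl (0:ℝ), hmin⟩] with ε hε
  obtain ⟨hε0, hεm⟩ := hε
  have hεt : ε < t := lt_of_lt_of_le hεm (min_le_left _ _)
  have hε1 : ε < 1 - t := lt_of_lt_of_le hεm (min_le_right _ _)
  have i1 : (∫ x in (0:ℝ)..(t-ε), Real.sqrt (x*(1-x)) / (x-t)) = Ff t (t-ε) - Ff t 0 := by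
    apply integral_eq_sub_of_hasDerivAt_of_le (by linarith)
    · exact Ff_contOn ht0 ht1 (Icc_subset_Icc le_rfl (by linarith))
        (fun x hx => ne_of_lt (lt_of_le_of_lt hx.2 (by linarith)))
    · intro x hx
      exact Ff_deriv ht0 ht1 hx.1 (by linarith [hx.2]) (ne_of_lt (by linarith [hx.2]))
    · apply intervalIntegrable_w_div
      intro x hx
      rw [uIcc_of_le (by linarith : (0:ℝ) ≤ t-ε)] at hx
      have := hx.2
      intro h
      have : x = t := by linarith [sub_eq_zero.1 h]
      linarith [this ▸ hx.2]
  have i2 : (∫ x in (t+ε)..(1:ℝ), Real.sqrt (x*(1-x)) / (x-t)) = Ff t 1 - Ff t (t+ε) := by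
    apply integral_eq_sub_of_hasDerivAt_of_le (by linarith)
    · exact Ff_contOn ht0 ht1 (Icc_subset_Icc (by linarith) le_rfl)
        (fun x hx => ne_of_gt (lt_of_lt_of_le (by linarith) hx.1))
    · intro x hx
      exact Ff_deriv ht0 ht1 (by linarith [hx.1]) hx.2 (ne_of_gt (by linarith [hx.1]))
    · apply intervalIntegrable_w_div
      intro x hx
      rw [uIcc_of_le (by linarith : t+ε ≤ (1:ℝ))] at hx
      intro h
      have : x = t := by linarith [sub_eq_zero.1 h]
      linarith [this ▸ hx.1]
  rw [i1, i2, Ff_one ht0 ht1, Ff_zero ht0 ht1]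
  unfold Ff
  rw [show t - ε - t = -ε by ring, show t + ε - t = ε by ring, Real.log_neg_eq_log]
  ring

lemma tendsto_sub_eps (t : ℝ) : Tendsto (fun ε : ℝ => t - ε)
    (nhdsWithin 0 (Set.Ioi 0)) (nhds t) := by
  have : Tendsto (fun ε : ℝ => t - ε) (nhds 0) (nhds (t - 0)) :=
    tendsto_const_nhds.sub tendsto_id
  simpa using this.mono_left nhdsWithin_le_nhds

lemma tendsto_add_eps (t : ℝ) : Tendsto (fun ε : ℝ => t + ε)
    (nhdsWithin 0 (Set.Ioi 0)) (nhds t) := by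
  have : Tendsto (fun ε : ℝ => t + ε) (nhds 0) (nhds (t + 0)) :=
    tendsto_const_nhds.add tendsto_id
  simpa using this.mono_left nhdsWithin_le_nhds

lemma tendsto_break {g : ℝ → ℝ} (hg : Continuous g) (t : ℝ) :
    Tendsto (fun ε : ℝ => (∫ x in (0:ℝ)..(t-ε), g x) + ∫ x in (t+ε)..(1:ℝ), g x)
      (nhdsWithin 0 (Set.Ioi 0)) (nhds (∫ x in (0:ℝ)..1, g x)) := by
  have hprim : Continuous (fun r : ℝ => ∫ x in (0:ℝ)..r, g x) :=
    intervalIntegral.continuous_primitive (fun a b => hg.intervalIntegrable a b) 0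
  have hrw : ∀ ε : ℝ, (∫ x in (0:ℝ)..(t-ε), g x) + (∫ x in (t+ε)..(1:ℝ), g x)
      = (∫ x in (0:ℝ)..(t-ε), g x) + ((∫ x in (0:ℝ)..(1:ℝ), g x) - ∫ x in (0:ℝ)..(t+ε), g x) := by
    intro ε
    congr 1
    rw [eq_sub_iff_add_eq', intervalIntegral.integral_add_adjacent_intervals
      (hg.intervalIntegrable _ _) (hg.intervalIntegrable _ _)]
  simp_rw [hrw]
  have ha : Tendsto (fun ε : ℝ => ∫ x in (0:ℝ)..(t-ε), g x)
      (nhdsWithin 0 (Set.Ioi 0)) (nhds (∫ x in (0:ℝ)..t, g x)) :=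
    hprim.continuousAt.tendsto.comp (tendsto_sub_eps t)
  have hb : Tendsto (fun ε : ℝ => ∫ x in (0:ℝ)..(t+ε), g x)
      (nhdsWithin 0 (Set.Ioi 0)) (nhds (∫ x in (0:ℝ)..t, g x)) :=
    hprim.continuousAt.tendsto.comp (tendsto_add_eps t)
  have hc : Tendsto (fun ε : ℝ => (∫ x in (0:ℝ)..(1:ℝ), g x) - ∫ x in (0:ℝ)..(t+ε), g x)
      (nhdsWithin 0 (Set.Ioi 0))
      (nhds ((∫ x in (0:ℝ)..(1:ℝ), g x) - ∫ x in (0:ℝ)..t, g x)) :=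
    tendsto_const_nhds.sub hb
  have h := ha.add hc
  simpa using h

lemma intervalIntegrable_wU_div (k : ℤ) {t a b : ℝ} (hne : ∀ x ∈ uIcc a b, x - t ≠ 0) :
    IntervalIntegrable (fun x => Real.sqrt (x*(1-x)) * (Chebyshev.U ℝ k).eval (2*x-1) / (x-t))
      MeasureTheory.volume a b := by
  apply ContinuousOn.intervalIntegrable
  exact ContinuousOn.div
    (continuous_w.continuousOn.mul
      (((Chebyshev.U ℝ k).continuous_aeval.comp (by continuity)).continuousOn))
    (by fun_prop) hne

lemma continuous_wU (k : ℤ) :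
    Continuous (fun x => Real.sqrt (x*(1-x)) * (Chebyshev.U ℝ k).eval (2*x-1)) :=
  continuous_w.mul ((Chebyshev.U ℝ k).continuous_aeval.comp (by continuity))

lemma split_int (k : ℤ) {t a b : ℝ} (hne : ∀ x ∈ uIcc a b, x - t ≠ 0) :
    (∫ x in a..b, Real.sqrt (x*(1-x)) * (Chebyshev.U ℝ (k+2)).eval (2*x-1) / (x-t))
      = 4 * (∫ x in a..b, Real.sqrt (x*(1-x)) * (Chebyshev.U ℝ (k+1)).eval (2*x-1))
        + (2*(2*t-1)) * (∫ x in a..b, Real.sqrt (x*(1-x)) * (Chebyshev.U ℝ (k+1)).eval (2*x-1) / (x-t))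
        - ∫ x in a..b, Real.sqrt (x*(1-x)) * (Chebyshev.U ℝ k).eval (2*x-1) / (x-t) := by
  rw [← intervalIntegral.integral_const_mul, ← intervalIntegral.integral_const_mul,
    ← intervalIntegral.integral_add ((continuous_wU (k+1)).intervalIntegrable a b |>.const_mul 4)
      ((intervalIntegrable_wU_div (k+1) hne).const_mul _),
    ← intervalIntegral.integral_sub
      (((continuous_wU (k+1)).intervalIntegrable a b |>.const_mul 4).add
        ((intervalIntegrable_wU_div (k+1) hne).const_mul _))
      (intervalIntegrable_wU_div k hne)]
  apply intervalIntegral.integral_congr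
  intro x hx
  have hxt : x - t ≠ 0 := hne x hx
  simp only [Polynomial.Chebyshev.U_add_two, eval_sub, eval_mul, eval_ofNat, eval_X]
  field_simp
  ring

lemma hne_left {t ε : ℝ} (ht0 : 0 < t) (hε : 0 < ε) :
    ∀ x ∈ uIcc (0:ℝ) (t-ε), x - t ≠ 0 := by
  intro x hx h
  have hxt : x = t := by have := sub_eq_zero.1 h; linarith
  rcases Set.mem_uIcc.1 hx with ⟨h1, h2⟩ | ⟨h1, h2⟩ <;> rw [hxt] at h1 h2 <;> linarith

lemma hne_right {t ε : ℝ} (ht1 : t < 1) (hε : 0 < ε) :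
    ∀ x ∈ uIcc (t+ε) (1:ℝ), x - t ≠ 0 := by
  intro x hx h
  have hxt : x = t := by have := sub_eq_zero.1 h; linarith
  rcases Set.mem_uIcc.1 hx with ⟨h1, h2⟩ | ⟨h1, h2⟩ <;> rw [hxt] at h1 h2 <;> linarith

end CPVaux

open CPVaux in
/-- ⨍₀¹ √(x(1−x))·U_k(2x−1)/(x−t) dx = −(π/2)·T_{k+1}(2t−1) (Cauchy principal
value), where T and U are the Chebyshev polynomials of the first and second
kinds. -/
theorem cpv_chebyshev_weight
    (t : ℝ) (ht0 : 0 < t) (ht1 : t < 1) (k : ℕ) :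
    Tendsto (fun ε : ℝ =>
        (∫ x in (0 : ℝ)..(t - ε),
          Real.sqrt (x * (1 - x)) * (Chebyshev.U ℝ k).eval (2 * x - 1) / (x - t)) +
        ∫ x in (t + ε)..(1 : ℝ),
          Real.sqrt (x * (1 - x)) * (Chebyshev.U ℝ k).eval (2 * x - 1) / (x - t))
      (nhdsWithin 0 (Set.Ioi 0))
      (nhds (-(Real.pi / 2) * (Chebyshev.T ℝ (k + 1)).eval (2 * t - 1))) := by
  induction k using Nat.twoStepInduction with
  | zero =>
    simpa [Polynomial.Chebyshev.U_zero, Polynomial.Chebyshev.T_one] using pv0 ht0 ht1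
  | one =>
    have hI : (∫ x in (0:ℝ)..1, Real.sqrt (x * (1 - x))
        * (Chebyshev.U ℝ (0:ℤ)).eval (2 * x - 1)) = π/8 := by
      simp only [Polynomial.Chebyshev.U_zero, eval_one, mul_one]
      exact integral_w
    have hB := tendsto_break (continuous_wU 0) t
    rw [hI] at hB
    have hS0 := pv0 ht0 ht1
    have hcomb := (hB.const_mul 4).add (hS0.const_mul (2*(2*t-1)))
    have hval : 4*(π/8) + (2*(2*t-1))*(-(π/2)*(2*t-1))
        = -(π/2) * (Chebyshev.T ℝ (↑(1:ℕ)+1)).eval (2*t-1) := by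
      have hT := Polynomial.Chebyshev.T_add_two ℝ 0
      norm_num at hT ⊢
      rw [hT]
      simp only [eval_sub, eval_mul, eval_ofNat, eval_X, Polynomial.Chebyshev.T_one,
        Polynomial.Chebyshev.T_zero, eval_one]
      ring
    rw [← hval]
    apply hcomb.congr'
    filter_upwards [self_mem_nhdsWithin] with ε hε
    have hεpos : (0:ℝ) < ε := hε
    have e1 := split_int (k := (-1:ℤ)) (t := t) (hne_left ht0 hεpos)
    have e2 := split_int (k := (-1:ℤ)) (t := t) (hne_right ht1 hεpos)
    norm_num [Polynomial.Chebyshev.U_neg_one, Polynomial.Chebyshev.U_zero] at e1 e2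
    show 4 * _ + 2*(2*t-1) * _ = _
    rw [show ((1:ℕ):ℤ) = ((-1:ℤ)+2) by norm_num]
    norm_num [Polynomial.Chebyshev.U_one, Polynomial.Chebyshev.U_zero]
    rw [e1, e2]
    ring
  | more k ih ih1 =>
    have cast2 : ((k+2 : ℕ) : ℤ) = ((k : ℕ) : ℤ) + 2 := by push_cast; ring
    have cast1 : ((k+1 : ℕ) : ℤ) = ((k : ℕ) : ℤ) + 1 := by push_cast; ring
    have hI0 : (∫ x in (0:ℝ)..1, Real.sqrt (x * (1 - x))
        * (Chebyshev.U ℝ ((k:ℤ)+1)).eval (2 * x - 1)) = 0 := by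
      rw [← cast1]; exact integral_w_U (k+1) (by omega)
    have hB := tendsto_break (continuous_wU ((k:ℤ)+1)) t
    rw [hI0] at hB
    have hcomb := ((hB.const_mul 4).add (ih1.const_mul (2*(2*t-1)))).sub ih
    have hval : 4*(0:ℝ) + (2*(2*t-1))*(-(π/2) * (Chebyshev.T ℝ (↑(k+1)+1)).eval (2*t-1))
        - (-(π/2) * (Chebyshev.T ℝ (↑k+1)).eval (2*t-1))
        = -(π/2) * (Chebyshev.T ℝ (↑(k+2)+1)).eval (2*t-1) := by
      have hT := Polynomial.Chebyshev.T_add_two ℝ ((k:ℤ)+1)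
      rw [cast2, cast1, show ((k:ℤ)+2)+1 = ((k:ℤ)+1)+2 by ring,
        show ((k:ℤ)+1)+1 = ((k:ℤ)+2) by ring, hT]
      simp only [eval_sub, eval_mul, eval_ofNat, eval_X]
      ring
    rw [← hval]
    apply hcomb.congr'
    filter_upwards [self_mem_nhdsWithin] with ε hε
    have hεpos : (0:ℝ) < ε := hε
    have e1 := split_int (k := (k:ℤ)) (t := t) (hne_left ht0 hεpos)
    have e2 := split_int (k := (k:ℤ)) (t := t) (hne_right ht1 hεpos)
    show 4 * _ + 2*(2*t-1) * _ - _ = _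
    rw [cast2, cast1, e1, e2]
    ring
end
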